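/- arXiv:math/9809061 — 6 statements merged into one kernel-verified Lean document; each statement's English description precedes it below -/
import Mathlib

section
/- Let n ≥ 3. If X is a polynomial vector field on ℝ^n such that for every i the partial derivative ∂_i X lies in the projective Lie algebra sl(n+1,ℝ) (spanned by ∂_j, x^j ∂_k, x^j E), then every component of X is a polynomial of degree at most 2. -/
open MvPolynomial
open scoped BigOperators

open MvPolynomial

local notation "ee" j => Finsupp.single j (1:ℕ)

lemma my_coeff_pderiv {n : ℕ} (i : Fin n) (d : Fin n →₀ ℕ) (p : MvPolynomial (Fin n) ℝ) :
    coeff d (pderiv i p) = ((d i : ℝ) + 1) * coeff (d + Finsupp.single i 1) p := by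
  classical
  induction p using MvPolynomial.induction_on' with
  | add p q hp hq => simp [hp, hq, mul_add]
  | monomial u a =>
    rw [pderiv_monomial, coeff_monomial, coeff_monomial]
    split_ifs with h1 h2 h2
    · subst h2
      have hd : ((d + Finsupp.single i 1 : Fin n →₀ ℕ)) i = d i + 1 := by
        simp [Finsupp.add_apply]
      rw [hd]; push_cast; ring
    · -- u - single i 1 = d but u ≠ d + single i 1 : then u i = 0
      have hui : u i = 0 := by
        by_contra hui
        apply h2
        ext j
        have hj : u j - (Finsupp.single i 1 : Fin n →₀ ℕ) j = d j := by
          rw [← Finsupp.tsub_apply, h1]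
        simp only [Finsupp.coe_add, Pi.add_apply]
        rcases eq_or_ne j i with rfl | hne
        · rw [Finsupp.single_eq_same] at hj ⊢; omega
        · rw [Finsupp.single_eq_of_ne' (Ne.symm hne)] at hj ⊢; omega
      simp [hui]
    · exfalso; apply h1; subst h2
      ext j
      simp only [Finsupp.coe_tsub, Pi.sub_apply, Finsupp.coe_add, Pi.add_apply]
      omega
    · simp

lemma deg_add {n : ℕ} (a b : Fin n →₀ ℕ) :
    ((a + b).sum fun _ e => e) = (a.sum fun _ e => e) + (b.sum fun _ e => e) :=
  Finsupp.sum_add_index' (fun _ => rfl) (fun _ _ _ => rfl)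

lemma deg_single {n : ℕ} (j : Fin n) : ((Finsupp.single j 1 : Fin n →₀ ℕ).sum fun _ e => e) = 1 :=
  Finsupp.sum_single_index rfl

lemma eq_single_of_deg_one {n : ℕ} (s : Fin n →₀ ℕ) (h : (s.sum fun _ e => e) = 1) :
    ∃ j, s = Finsupp.single j 1 := by
  rw [Finsupp.sum] at h
  have hne : s.support.Nonempty := by
    by_contra hc
    rw [Finset.not_nonempty_iff_eq_empty] at hc
    rw [hc] at h; simp at h
  obtain ⟨j, hj⟩ := hne
  refine ⟨j, Finsupp.ext fun a => ?_⟩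
  rcases eq_or_ne a j with rfl | ha
  · have h1 : 1 ≤ s a := Nat.one_le_iff_ne_zero.mpr (Finsupp.mem_support_iff.mp hj)
    have h2 : s a ≤ ∑ x ∈ s.support, s x := Finset.single_le_sum (fun _ _ => Nat.zero_le _) hj
    simp only [Finsupp.single_eq_same]; omega
  · rw [Finsupp.single_eq_of_ne' (Ne.symm ha)]
    by_contra hc
    have ha' : a ∈ s.support := Finsupp.mem_support_iff.mpr hc
    have hsub : ({j, a} : Finset (Fin n)) ⊆ s.support := by
      intro x hx
      rcases Finset.mem_insert.mp hx with rfl | hx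
      · exact hj
      · rwa [Finset.mem_singleton.mp hx]
    have hsum : s j + s a ≤ ∑ x ∈ s.support, s x := by
      calc s j + s a = ∑ x ∈ ({j, a} : Finset (Fin n)), s x := (Finset.sum_pair (Ne.symm ha)).symm
        _ ≤ ∑ x ∈ s.support, s x := Finset.sum_le_sum_of_subset hsub
    have h1 : 1 ≤ s j := Nat.one_le_iff_ne_zero.mpr (Finsupp.mem_support_iff.mp hj)
    have h2 : 1 ≤ s a := Nat.one_le_iff_ne_zero.mpr hc
    omega

lemma exists_third {n : ℕ} (hn : 3 ≤ n) (i j : Fin n) : ∃ m : Fin n, m ≠ i ∧ m ≠ j := by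
  by_contra hc
  push_neg at hc
  have hsub : (Finset.univ : Finset (Fin n)) ⊆ {i, j} := by
    intro m _
    rcases eq_or_ne m i with rfl | h
    · simp
    · simp [hc m h]
  have hcard := Finset.card_le_card hsub
  have h2 : ({i, j} : Finset (Fin n)).card ≤ 2 := by
    calc ({i, j} : Finset (Fin n)).card ≤ ({j} : Finset (Fin n)).card + 1 := Finset.card_insert_le _ _
      _ ≤ 2 := by simp
  simp only [Finset.card_univ, Fintype.card_fin] at hcard
  omega
open MvPolynomial

lemma my_Xmul {n : ℕ} (j k : Fin n) : (X j * X k : MvPolynomial (Fin n) ℝ)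
    = monomial (Finsupp.single j 1 + Finsupp.single k 1) 1 := by
  rw [X, X, monomial_mul, one_mul]

lemma deg_add' {n : ℕ} (a b : Fin n →₀ ℕ) :
    ((a + b).sum fun _ e => e) = (a.sum fun _ e => e) + (b.sum fun _ e => e) :=
  Finsupp.sum_add_index' (fun _ => rfl) (fun _ _ _ => rfl)

lemma deg_single' {n : ℕ} (j : Fin n) : ((Finsupp.single j 1 : Fin n →₀ ℕ).sum fun _ e => e) = 1 :=
  Finsupp.sum_single_index rfl

lemma span_props {n : ℕ} (v : Fin n → MvPolynomial (Fin n) ℝ)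
    (hv : v ∈ Submodule.span ℝ
          (({v | ∃ j : Fin n, v = Pi.single j 1} ∪
            {v | ∃ j k : Fin n, v = Pi.single k (MvPolynomial.X j)} ∪
            {v | ∃ j : Fin n, v = fun k => MvPolynomial.X j * MvPolynomial.X k})
            : Set (Fin n → MvPolynomial (Fin n) ℝ))) :
    (∀ (k : Fin n) (d : Fin n →₀ ℕ), 2 < (d.sum fun _ e => e) → coeff d (v k) = 0) ∧
    (∀ (k : Fin n) (d : Fin n →₀ ℕ), (d.sum fun _ e => e) = 2 → d k = 0 → coeff d (v k) = 0) ∧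
    (∀ j k k' : Fin n, j ≠ k → j ≠ k' → k ≠ k' →
      coeff (Finsupp.single j 1 + Finsupp.single k 1) (v k)
        = coeff (Finsupp.single j 1 + Finsupp.single k' 1) (v k')) ∧
    (∀ k k' : Fin n, k ≠ k' →
      coeff (Finsupp.single k 1 + Finsupp.single k 1) (v k)
        = coeff (Finsupp.single k 1 + Finsupp.single k' 1) (v k')) := by
  classical
  induction hv using Submodule.span_induction with
  | zero => simp
  | add x y hx hy ihx ihy =>
    obtain ⟨hx1, hx2, hx3, hx4⟩ := ihx
    obtain ⟨hy1, hy2, hy3, hy4⟩ := ihy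
    refine ⟨fun k d h => ?_, fun k d h h' => ?_, fun j k k' h1 h2 h3 => ?_, fun k k' h => ?_⟩
    · simp [coeff_add, hx1 k d h, hy1 k d h]
    · simp [coeff_add, hx2 k d h h', hy2 k d h h']
    · simp only [Pi.add_apply, coeff_add, hx3 j k k' h1 h2 h3, hy3 j k k' h1 h2 h3]
    · simp only [Pi.add_apply, coeff_add, hx4 k k' h, hy4 k k' h]
  | smul a x hx ihx =>
    obtain ⟨hx1, hx2, hx3, hx4⟩ := ihx
    refine ⟨fun k d h => ?_, fun k d h h' => ?_, fun j k k' h1 h2 h3 => ?_, fun k k' h => ?_⟩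
    · simp [coeff_smul, hx1 k d h]
    · simp [coeff_smul, hx2 k d h h']
    · simp only [Pi.smul_apply, coeff_smul, hx3 j k k' h1 h2 h3]
    · simp only [Pi.smul_apply, coeff_smul, hx4 k k' h]
  | mem x hxmem =>
    rcases hxmem with (⟨j0, rfl⟩ | ⟨j0, k0, rfl⟩) | ⟨j0, rfl⟩
    · -- constant generator
      have key : ∀ (k : Fin n) (d : Fin n →₀ ℕ), (d.sum fun _ e => e) ≠ 0 →
          coeff d (Pi.single (M := fun _ => MvPolynomial (Fin n) ℝ) j0 1 k) = 0 := by
        intro k d hd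
        rcases eq_or_ne k j0 with rfl | h
        · rw [Pi.single_eq_same, coeff_one, if_neg]
          intro h0
          exact hd (by rw [← h0]; simp)
        · rw [Pi.single_eq_of_ne h, coeff_zero]
      refine ⟨fun k d h => key k d (by omega), fun k d h _ => key k d (by omega),
        fun j k k' _ _ _ => ?_, fun k k' _ => ?_⟩ <;>
        rw [key _ _ (by simp [deg_add', deg_single']),
          key _ _ (by simp [deg_add', deg_single'])]
    · -- linear generator
      have key : ∀ (k : Fin n) (d : Fin n →₀ ℕ), (d.sum fun _ e => e) ≠ 1 →
          coeff d (Pi.single (M := fun _ => MvPolynomial (Fin n) ℝ) k0 (X j0) k) = 0 := by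
        intro k d hd
        rcases eq_or_ne k k0 with rfl | h
        · rw [Pi.single_eq_same, coeff_X', if_neg]
          intro h0
          exact hd (by rw [← h0, deg_single'])
        · rw [Pi.single_eq_of_ne h, coeff_zero]
      refine ⟨fun k d h => key k d (by omega), fun k d h _ => key k d (by omega),
        fun j k k' _ _ _ => ?_, fun k k' _ => ?_⟩ <;>
        rw [key _ _ (by simp [deg_add', deg_single']),
          key _ _ (by simp [deg_add', deg_single'])]
    · -- quadratic generator
      have key : ∀ (k : Fin n) (d : Fin n →₀ ℕ),
          coeff d ((fun k => (X j0 * X k : MvPolynomial (Fin n) ℝ)) k)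
            = if (Finsupp.single j0 1 + Finsupp.single k 1 : Fin n →₀ ℕ) = d then 1 else 0 := by
        intro k d
        simp only [my_Xmul, coeff_monomial]
      refine ⟨fun k d h => ?_, fun k d h h' => ?_, fun j k k' h1 h2 h3 => ?_, fun k k' h => ?_⟩
      · rw [key, if_neg]
        intro h0
        rw [← h0, deg_add', deg_single', deg_single'] at h
        omega
      · rw [key, if_neg]
        intro h0
        rw [← h0] at h'
        simp [Finsupp.add_apply, Finsupp.single_eq_same] at h'
      · rw [key, key]
        simp only [add_left_inj, Finsupp.single_left_inj (one_ne_zero : (1:ℕ) ≠ 0)]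
      · rw [key, key]
        simp only [add_left_inj, Finsupp.single_left_inj (one_ne_zero : (1:ℕ) ≠ 0)]

section Main
variable {n : ℕ} (Xf : Fin n → MvPolynomial (Fin n) ℝ)

lemma lemC
    (HP2 : ∀ (i k : Fin n) (d : Fin n →₀ ℕ), (d.sum fun _ e => e) = 2 → d k = 0 →
      coeff d (pderiv i (Xf k)) = 0)
    (i j m : Fin n) (hmi : m ≠ i) (hmj : m ≠ j) :
    coeff (Finsupp.single j 1 + Finsupp.single m 1) (pderiv i (Xf m)) = 0 := by
  have h2 := my_coeff_pderiv m (Finsupp.single j 1 + Finsupp.single i 1) (Xf m)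
  have hz : coeff (Finsupp.single j 1 + Finsupp.single i 1) (pderiv m (Xf m)) = 0 :=
    HP2 m m _ (by simp [deg_add', deg_single'])
      (by simp [Finsupp.add_apply, Finsupp.single_eq_of_ne' (Ne.symm hmj),
        Finsupp.single_eq_of_ne' (Ne.symm hmi)])
  rw [hz] at h2
  have hC : coeff (Finsupp.single j 1 + Finsupp.single i 1 + Finsupp.single m 1) (Xf m) = 0 := by
    have hpos : (0:ℝ) < ((Finsupp.single j 1 + Finsupp.single i 1 : Fin n →₀ ℕ) m : ℝ) + 1 := by
      positivity
    have := h2.symm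
    rcases mul_eq_zero.mp this with h | h
    · exact absurd h (ne_of_gt hpos)
    · exact h
  have h1 := my_coeff_pderiv i (Finsupp.single j 1 + Finsupp.single m 1) (Xf m)
  have heq : Finsupp.single j 1 + Finsupp.single m 1 + Finsupp.single i 1
      = Finsupp.single j 1 + Finsupp.single i 1 + Finsupp.single m 1 := by
    rw [add_right_comm]
  rw [h1, heq, hC, mul_zero]

lemma lemB (hn : 3 ≤ n)
    (HP2 : ∀ (i k : Fin n) (d : Fin n →₀ ℕ), (d.sum fun _ e => e) = 2 → d k = 0 →
      coeff d (pderiv i (Xf k)) = 0)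
    (HP3 : ∀ i j k k' : Fin n, j ≠ k → j ≠ k' → k ≠ k' →
      coeff (Finsupp.single j 1 + Finsupp.single k 1) (pderiv i (Xf k))
        = coeff (Finsupp.single j 1 + Finsupp.single k' 1) (pderiv i (Xf k')))
    (HP4 : ∀ i k k' : Fin n, k ≠ k' →
      coeff (Finsupp.single k 1 + Finsupp.single k 1) (pderiv i (Xf k))
        = coeff (Finsupp.single k 1 + Finsupp.single k' 1) (pderiv i (Xf k')))
    (i j k : Fin n) :
    coeff (Finsupp.single j 1 + Finsupp.single k 1) (pderiv i (Xf k)) = 0 := by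
  obtain ⟨m, hmi, hmj⟩ := exists_third hn i j
  rcases eq_or_ne k m with rfl | hkm
  · exact lemC Xf HP2 i j k hmi hmj
  · rcases eq_or_ne j k with rfl | hjk
    · rw [HP4 i j m (Ne.symm hmj)]
      exact lemC Xf HP2 i j m hmi hmj
    · rw [HP3 i j k m hjk (Ne.symm hmj) hkm]
      exact lemC Xf HP2 i j m hmi hmj

lemma lemA (hn : 3 ≤ n)
    (HP2 : ∀ (i k : Fin n) (d : Fin n →₀ ℕ), (d.sum fun _ e => e) = 2 → d k = 0 →
      coeff d (pderiv i (Xf k)) = 0)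
    (HP3 : ∀ i j k k' : Fin n, j ≠ k → j ≠ k' → k ≠ k' →
      coeff (Finsupp.single j 1 + Finsupp.single k 1) (pderiv i (Xf k))
        = coeff (Finsupp.single j 1 + Finsupp.single k' 1) (pderiv i (Xf k')))
    (HP4 : ∀ i k k' : Fin n, k ≠ k' →
      coeff (Finsupp.single k 1 + Finsupp.single k 1) (pderiv i (Xf k))
        = coeff (Finsupp.single k 1 + Finsupp.single k' 1) (pderiv i (Xf k')))
    (i k : Fin n) (d : Fin n →₀ ℕ) (hd : (d.sum fun _ e => e) = 2) :
    coeff d (pderiv i (Xf k)) = 0 := by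
  rcases eq_or_ne (d k) 0 with hk | hk
  · exact HP2 i k d hd hk
  · set t := d - Finsupp.single k 1 with ht
    have hdt : d = t + Finsupp.single k 1 := by
      ext a
      simp only [ht, Finsupp.coe_add, Pi.add_apply, Finsupp.coe_tsub, Pi.sub_apply]
      rcases eq_or_ne a k with rfl | ha
      · rw [Finsupp.single_eq_same]; omega
      · rw [Finsupp.single_eq_of_ne' (Ne.symm ha)]; omega
    have hdegt : (t.sum fun _ e => e) = 1 := by
      have := hd
      rw [hdt, deg_add', deg_single'] at this
      omega
    obtain ⟨j, hj⟩ := eq_single_of_deg_one t hdegt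
    rw [hdt, hj]
    exact lemB Xf hn HP2 HP3 HP4 i j k

end Main

/-- if `X` is a polynomial vector field on `ℝⁿ` (`n ≥ 3`) such
that each partial derivative `∂ᵢ X` lies in the projective Lie algebra
`sl(n+1,ℝ)` (the span of the fields `∂ⱼ`, `xʲ ∂ₖ`, `xʲ E`), then every
component of `X` is a polynomial of degree at most `2`. -/
theorem degree_le_two_of_pderiv_mem_sl
    (n : ℕ) (hn : 3 ≤ n)
    (Xf : Fin n → MvPolynomial (Fin n) ℝ)
    (hX : ∀ i : Fin n,
      (fun k => MvPolynomial.pderiv i (Xf k)) ∈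
        Submodule.span ℝ
          (({v | ∃ j : Fin n, v = Pi.single j 1} ∪
            {v | ∃ j k : Fin n, v = Pi.single k (MvPolynomial.X j)} ∪
            {v | ∃ j : Fin n, v = fun k => MvPolynomial.X j * MvPolynomial.X k})
            : Set (Fin n → MvPolynomial (Fin n) ℝ))) :
    ∀ k : Fin n, (Xf k).totalDegree ≤ 2 := by
  have H := fun i => span_props _ (hX i)
  have HP1 : ∀ (i k : Fin n) (d : Fin n →₀ ℕ), 2 < (d.sum fun _ e => e) →
      coeff d (pderiv i (Xf k)) = 0 := fun i => (H i).1
  have HP2 : ∀ (i k : Fin n) (d : Fin n →₀ ℕ), (d.sum fun _ e => e) = 2 → d k = 0 →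
      coeff d (pderiv i (Xf k)) = 0 := fun i => (H i).2.1
  have HP3 : ∀ i j k k' : Fin n, j ≠ k → j ≠ k' → k ≠ k' →
      coeff (Finsupp.single j 1 + Finsupp.single k 1) (pderiv i (Xf k))
        = coeff (Finsupp.single j 1 + Finsupp.single k' 1) (pderiv i (Xf k')) :=
    fun i => (H i).2.2.1
  have HP4 : ∀ i k k' : Fin n, k ≠ k' →
      coeff (Finsupp.single k 1 + Finsupp.single k 1) (pderiv i (Xf k))
        = coeff (Finsupp.single k 1 + Finsupp.single k' 1) (pderiv i (Xf k')) :=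
    fun i => (H i).2.2.2
  intro k
  rw [MvPolynomial.totalDegree]
  apply Finset.sup_le
  intro d hd
  by_contra hlt
  push_neg at hlt
  have hc : coeff d (Xf k) ≠ 0 := MvPolynomial.mem_support_iff.mp hd
  -- pick i with d i ≠ 0
  have hdne : d ≠ 0 := by
    intro h0
    rw [h0] at hlt
    simp at hlt
  obtain ⟨i, hi⟩ := Finsupp.support_nonempty_iff.mpr hdne
  have hi' : d i ≠ 0 := Finsupp.mem_support_iff.mp hi
  set t := d - Finsupp.single i 1 with ht
  have hdt : d = t + Finsupp.single i 1 := by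
    ext a
    simp only [ht, Finsupp.coe_add, Pi.add_apply, Finsupp.coe_tsub, Pi.sub_apply]
    rcases eq_or_ne a i with rfl | ha
    · rw [Finsupp.single_eq_same]; omega
    · rw [Finsupp.single_eq_of_ne' (Ne.symm ha)]; omega
  have hdegt : 2 ≤ (t.sum fun _ e => e) := by
    have h2 : (d.sum fun _ e => e) = (t.sum fun _ e => e) + 1 := by
      rw [hdt, deg_add', deg_single']
    omega
  have hcp : coeff t (pderiv i (Xf k)) ≠ 0 := by
    rw [my_coeff_pderiv, ← hdt]
    have hpos : (0:ℝ) < (t i : ℝ) + 1 := by positivity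
    exact mul_ne_zero (ne_of_gt hpos) hc
  rcases lt_or_eq_of_le hdegt with hgt | heq
  · exact hcp (HP1 i k t hgt)
  · exact hcp (lemA Xf hn HP2 HP3 HP4 i k t heq.symm)
end

section
/- For n ≥ 2, the Lie algebra generated by all polynomial vector fields on ℝ^n whose coefficients are homogeneous polynomials of degree at most 2 is the Lie algebra of all polynomial vector fields on ℝ^n. -/
open MvPolynomial
open scoped BigOperators

/-- Lie bracket of polynomial vector fields on `ℝⁿ`:
`[X,Y]^j = Σᵢ Xⁱ ∂ᵢ Yʲ − Yⁱ ∂ᵢ Xʲ`. -/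
noncomputable def pbracket {n : ℕ} (X Y : Fin n → MvPolynomial (Fin n) ℝ) :
    Fin n → MvPolynomial (Fin n) ℝ :=
  fun j => ∑ i, (X i * MvPolynomial.pderiv i (Y j)
                  - Y i * MvPolynomial.pderiv i (X j))

/-- The monomial vector field `x^α ∂_j`. -/
noncomputable def Evf {n : ℕ} (α : Fin n →₀ ℕ) (j : Fin n) : Fin n → MvPolynomial (Fin n) ℝ :=
  Pi.single j (monomial α 1)

lemma brE {n : ℕ} (γ β : Fin n →₀ ℕ) (j m : Fin n) :
    pbracket (Evf γ j) (Evf β m) = fun l =>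
      (if l = m then monomial (γ + (β - Finsupp.single j 1)) ((β j : ℝ)) else 0)
      - (if l = j then monomial (β + (γ - Finsupp.single m 1)) ((γ m : ℝ)) else 0) := by
  funext l
  have h1 : ∀ (p : MvPolynomial (Fin n) ℝ) (i : Fin n),
      (Evf γ j) i * pderiv i p = if i = j then monomial γ 1 * pderiv j p else 0 := by
    intro p i
    simp [Evf, Pi.single_apply]
    split <;> simp_all
  have h2 : ∀ (p : MvPolynomial (Fin n) ℝ) (i : Fin n),
      (Evf β m) i * pderiv i p = if i = m then monomial β 1 * pderiv m p else 0 := by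
    intro p i
    simp [Evf, Pi.single_apply]
    split <;> simp_all
  simp only [pbracket, h1, h2, Finset.sum_sub_distrib, Finset.sum_ite_eq', Finset.mem_univ,
    if_true]
  simp only [Evf, Pi.single_apply]
  rw [apply_ite (pderiv j), apply_ite (pderiv m)]
  simp [pderiv_monomial, monomial_mul, apply_ite (fun q => monomial γ (1:ℝ) * q),
    apply_ite (fun q => monomial β (1:ℝ) * q), mul_comm]

lemma sum_single_fin {n : ℕ} (j : Fin n) (c : ℕ) : ∑ i, (Finsupp.single j c) i = c := by
  simp [Finsupp.single_apply]

lemma sum_tsub_single {n : ℕ} (α : Fin n →₀ ℕ) (j : Fin n) (h : 1 ≤ α j) :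
    ∑ i, (α - Finsupp.single j 1 : Fin n →₀ ℕ) i = (∑ i, α i) - 1 := by
  have h1 : ∀ i, (α - Finsupp.single j 1 : Fin n →₀ ℕ) i = α i - (Finsupp.single j 1) i := by
    intro i; rw [Finsupp.tsub_apply]
  simp_rw [h1]
  rw [Finset.sum_tsub_distrib]
  · simp [Finsupp.single_apply]
  · intro i _; simp [Finsupp.single_apply]; split <;> simp_all

lemma pair_le {n : ℕ} {α : Fin n →₀ ℕ} {j k : Fin n} (hjk : j ≠ k) (hj : 1 ≤ α j)
    (hk : 1 ≤ α k) : Finsupp.single j 1 + Finsupp.single k 1 ≤ α := by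
  rw [Finsupp.le_def]
  intro i
  rw [Finsupp.add_apply]
  simp only [Finsupp.single_apply]
  by_cases hji : j = i
  · subst hji
    have hkj' : ¬ k = j := fun h => hjk h.symm
    simpa [hkj'] using hj
  · by_cases hki : k = i
    · subst hki; simpa [hji] using hk
    · simp [hji, hki]

lemma two_sub_one {n : ℕ} (j : Fin n) :
    (Finsupp.single j 2 : Fin n →₀ ℕ) - Finsupp.single j 1 = Finsupp.single j 1 := by
  rw [show (2:ℕ) = 1 + 1 from rfl, Finsupp.single_add, add_tsub_cancel_left]

/-- for `n ≥ 2`, the Lie algebra generated by the polynomial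
vector fields on `ℝⁿ` of degree at most `2` is the Lie algebra of all
polynomial vector fields: any submodule of the polynomial vector fields
that is closed under the bracket and contains all fields of degree `≤ 2`
is everything. -/
theorem polyVF_deg_two_generate (n : ℕ) (hn : 2 ≤ n)
    (S : Submodule ℝ (Fin n → MvPolynomial (Fin n) ℝ))
    (hbr : ∀ X ∈ S, ∀ Y ∈ S, pbracket X Y ∈ S)
    (hdeg2 : ∀ X : Fin n → MvPolynomial (Fin n) ℝ,
      (∀ j, (X j).totalDegree ≤ 2) → X ∈ S) :
    S = ⊤ := by
  have deg2 : ∀ (α : Fin n →₀ ℕ) (j : Fin n), (∑ i, α i) ≤ 2 → Evf α j ∈ S := by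
    intro α j h
    apply hdeg2
    intro l
    simp only [Evf, Pi.single_apply]
    split
    · refine le_trans (totalDegree_monomial_le _ _) ?_
      rw [Finsupp.sum_fintype _ _ (fun _ => rfl)]
      exact h
    · simp
  have key : ∀ (d : ℕ) (α : Fin n →₀ ℕ) (j : Fin n), (∑ i, α i) ≤ d + 2 → Evf α j ∈ S := by
    intro d
    induction d with
    | zero => exact fun α j h => deg2 α j h
    | succ d IH =>
      -- Case A: the exponent of x_j in α is exactly 1
      have caseA : ∀ (α : Fin n →₀ ℕ) (j : Fin n), (∑ i, α i) ≤ d + 3 → α j = 1 →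
          Evf α j ∈ S := by
        intro α j hs h1
        have hjle : 1 ≤ α j := h1.ge
        have hβS : Evf (α - Finsupp.single j 1) j ∈ S := by
          apply IH
          rw [sum_tsub_single α j hjle]; omega
        have hγS : Evf (Finsupp.single j 2) j ∈ S := by
          apply deg2; rw [sum_single_fin]
        have hb := hbr _ hγS _ hβS
        rw [brE] at hb
        have heq : (fun l =>
            (if l = j then monomial (Finsupp.single j 2 + ((α - Finsupp.single j 1) - Finsupp.single j 1)) (((α - Finsupp.single j 1 : Fin n →₀ ℕ) j : ℝ)) else 0)
            - (if l = j then monomial ((α - Finsupp.single j 1) + (Finsupp.single j 2 - Finsupp.single j 1)) (((Finsupp.single j 2 : Fin n →₀ ℕ) j : ℝ)) else 0))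
            = (-2 : ℝ) • Evf α j := by
          have hz : ((α - Finsupp.single j 1 : Fin n →₀ ℕ) j : ℝ) = 0 := by
            rw [Finsupp.tsub_apply]; simp [h1]
          have hidx : (α - Finsupp.single j 1) + (Finsupp.single j 2 - Finsupp.single j 1) = α := by
            rw [two_sub_one, tsub_add_cancel_of_le (Finsupp.single_le_iff.mpr hjle)]
          have hc : ((Finsupp.single j 2 : Fin n →₀ ℕ) j : ℝ) = 2 := by simp
          funext l
          rw [hz, hidx, hc]
          simp only [monomial_zero, ite_self, zero_sub, Evf, Pi.smul_apply, Pi.single_apply,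
            smul_ite, smul_zero]
          split
          · rw [smul_monomial, ← map_neg]; norm_num
          · simp
        rw [heq] at hb
        have := S.smul_mem (-2⁻¹ : ℝ) hb
        rwa [smul_smul, show ((-2⁻¹ : ℝ) * (-2)) = 1 by norm_num, one_smul] at this
      intro α j hle
      rcases le_or_gt (∑ i, α i) (d + 2) with h | h
      · exact IH α j h
      have hD : (∑ i, α i) = d + 3 := by omega
      by_cases hj1 : α j = 1
      · exact caseA α j hD.le hj1
      by_cases hk : ∃ k, k ≠ j ∧ α k ≠ 0
      · -- Case B
        obtain ⟨k, hkj, hαk⟩ := hk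
        have hkle : 1 ≤ α k := Nat.one_le_iff_ne_zero.2 hαk
        have hγS : Evf (Finsupp.single j 1 + Finsupp.single k 1) j ∈ S := by
          apply deg2
          simp only [Finsupp.add_apply]
          rw [Finset.sum_add_distrib, sum_single_fin, sum_single_fin]
        have hβS : Evf (α - Finsupp.single k 1) j ∈ S := by
          apply IH
          rw [sum_tsub_single α k hkle]; omega
        have hb := hbr _ hγS _ hβS
        rw [brE] at hb
        have hbj : (α - Finsupp.single k 1 : Fin n →₀ ℕ) j = α j := by
          rw [Finsupp.tsub_apply]
          simp [Finsupp.single_apply, hkj]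
        have heq : (fun l =>
            (if l = j then monomial ((Finsupp.single j 1 + Finsupp.single k 1) + ((α - Finsupp.single k 1) - Finsupp.single j 1)) (((α - Finsupp.single k 1 : Fin n →₀ ℕ) j : ℝ)) else 0)
            - (if l = j then monomial ((α - Finsupp.single k 1) + ((Finsupp.single j 1 + Finsupp.single k 1) - Finsupp.single j 1)) (((Finsupp.single j 1 + Finsupp.single k 1 : Fin n →₀ ℕ) j : ℝ)) else 0))
            = ((α j : ℝ) - 1) • Evf α j := by
          have hc1 : ((Finsupp.single j 1 + Finsupp.single k 1 : Fin n →₀ ℕ) j : ℝ) = 1 := by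
            rw [Finsupp.add_apply]
            simp [Finsupp.single_apply, hkj]
          have hidx2 : (α - Finsupp.single k 1) + ((Finsupp.single j 1 + Finsupp.single k 1) - Finsupp.single j 1) = α := by
            rw [add_tsub_cancel_left, tsub_add_cancel_of_le (Finsupp.single_le_iff.mpr hkle)]
          have hm1 : monomial ((Finsupp.single j 1 + Finsupp.single k 1) + ((α - Finsupp.single k 1) - Finsupp.single j 1)) (((α - Finsupp.single k 1 : Fin n →₀ ℕ) j : ℝ)) = monomial α ((α j : ℝ)) := by
            rcases Nat.eq_zero_or_pos (α j) with h0 | hpos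
            · rw [hbj, h0]; simp
            · have hidx1 : (Finsupp.single j 1 + Finsupp.single k 1) + ((α - Finsupp.single k 1) - Finsupp.single j 1) = α := by
                rw [tsub_tsub, add_comm (Finsupp.single j 1) (Finsupp.single k 1),
                  add_tsub_cancel_of_le (pair_le hkj hkle hpos)]
              rw [hidx1, hbj]
          funext l
          rw [hm1, hidx2, hc1]
          simp only [Evf, Pi.smul_apply, Pi.single_apply, smul_ite, smul_zero]
          split
          · rw [smul_monomial, smul_eq_mul, mul_one, ← map_sub]
          · simp
        rw [heq] at hb
        have hne : ((α j : ℝ) - 1) ≠ 0 := by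
          intro hcon
          apply hj1
          have : (α j : ℝ) = 1 := by linarith
          exact_mod_cast this
        have := S.smul_mem (((α j : ℝ) - 1)⁻¹) hb
        rwa [smul_smul, inv_mul_cancel₀ hne, one_smul] at this
      · -- Case C : α = (d+3) • e_j
        push_neg at hk
        have hαj : α j = d + 3 := by
          have hsum : ∑ i, α i = α j := by
            apply Finset.sum_eq_single j
            · intro b _ hbj; exact hk b hbj
            · intro hj; exact absurd (Finset.mem_univ j) hj
          omega
        have hα : α = Finsupp.single j (d + 3) := by
          ext i
          rcases eq_or_ne i j with rfl | hij
          · simp [hαj]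
          · rw [hk i hij, Finsupp.single_apply, if_neg (fun h => hij h.symm)]
        have hnt : Nontrivial (Fin n) := Fin.nontrivial_iff_two_le.mpr hn
        obtain ⟨m, hmj⟩ := exists_ne j
        have hγS : Evf (Finsupp.single j 1 + Finsupp.single m 1) j ∈ S := by
          apply deg2
          simp only [Finsupp.add_apply]
          rw [Finset.sum_add_distrib, sum_single_fin, sum_single_fin]
        have hβS : Evf (Finsupp.single j (d + 2)) m ∈ S := by
          apply IH
          rw [sum_single_fin]
        have hα'S : Evf (Finsupp.single j (d + 2) + Finsupp.single m 1) m ∈ S := by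
          apply caseA
          · simp only [Finsupp.add_apply]
            rw [Finset.sum_add_distrib, sum_single_fin, sum_single_fin]
          · rw [Finsupp.add_apply, Finsupp.single_apply, Finsupp.single_apply,
              if_neg (fun h => hmj h.symm), if_pos rfl]
        have hb := hbr _ hγS _ hβS
        rw [brE] at hb
        have heq : (fun l =>
            (if l = m then monomial ((Finsupp.single j 1 + Finsupp.single m 1) + (Finsupp.single j (d + 2) - Finsupp.single j 1)) (((Finsupp.single j (d + 2) : Fin n →₀ ℕ) j : ℝ)) else 0)
            - (if l = j then monomial (Finsupp.single j (d + 2) + ((Finsupp.single j 1 + Finsupp.single m 1) - Finsupp.single m 1)) (((Finsupp.single j 1 + Finsupp.single m 1 : Fin n →₀ ℕ) m : ℝ)) else 0))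
            = ((d : ℝ) + 2) • Evf (Finsupp.single j (d + 2) + Finsupp.single m 1) m - Evf α j := by
          have hβj : (((Finsupp.single j (d + 2) : Fin n →₀ ℕ) j : ℕ) : ℝ) = (d : ℝ) + 2 := by
            simp
          have hidx1 : (Finsupp.single j 1 + Finsupp.single m 1) + (Finsupp.single j (d + 2) - Finsupp.single j 1) = Finsupp.single j (d + 2) + Finsupp.single m 1 := by
            rw [show d + 2 = 1 + (d + 1) from by omega, Finsupp.single_add,
              add_tsub_cancel_left]
            abel
          have hγm : ((Finsupp.single j 1 + Finsupp.single m 1 : Fin n →₀ ℕ) m : ℝ) = 1 := by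
            rw [Finsupp.add_apply, Finsupp.single_apply, Finsupp.single_apply,
              if_neg (fun h => hmj h.symm), if_pos rfl]
            norm_num
          have hidx2 : Finsupp.single j (d + 2) + ((Finsupp.single j 1 + Finsupp.single m 1) - Finsupp.single m 1) = α := by
            rw [add_tsub_cancel_right, ← Finsupp.single_add, hα]
          funext l
          rw [hβj, hγm, hidx1, hidx2]
          simp only [Pi.sub_apply, Pi.smul_apply, Evf, Pi.single_apply, smul_ite, smul_zero,
            smul_monomial, smul_eq_mul, mul_one]
        rw [heq] at hb
        have hfin : Evf α j = ((d : ℝ) + 2) • Evf (Finsupp.single j (d + 2) + Finsupp.single m 1) m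
            - (((d : ℝ) + 2) • Evf (Finsupp.single j (d + 2) + Finsupp.single m 1) m - Evf α j) := by
          abel
        rw [hfin]
        exact S.sub_mem (S.smul_mem _ hα'S) hb
  rw [eq_top_iff]
  intro f _
  have hsingle : ∀ (j : Fin n) (p : MvPolynomial (Fin n) ℝ), Pi.single j p ∈ S := by
    intro j p
    induction p using MvPolynomial.induction_on' with
    | monomial u a =>
      have hpa : (Pi.single j (monomial u a) : Fin n → MvPolynomial (Fin n) ℝ) = a • Evf u j := by
        funext l
        simp only [Evf, Pi.smul_apply, Pi.single_apply, smul_ite, smul_zero]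
        split <;> simp [smul_monomial]
      rw [hpa]
      exact S.smul_mem _ (key (∑ i, u i) u j (by omega))
    | add p q hp hq =>
      rw [Pi.single_add]
      exact S.add_mem hp hq
  have hf : f = ∑ j, Pi.single j (f j) := (Finset.univ_sum_single f).symm
  rw [hf]
  exact S.sum_mem (fun j _ => hsingle j (f j))
end

section
/- On the space S^k of polynomials homogeneous of degree k in ξ, the operator identity [L_{X_s}, Div^m] = m(2k − m + n) Div^{m−1} ∘ ∂_{ξ_s} holds, where X_s = x^s x^j ξ_j, Div = Σ_i ∂_{x^i}∂_{ξ_i}, and L denotes the Hamiltonian lift. -/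
open MvPolynomial
open scoped BigOperators

/-- `Pol(T*ℝⁿ)`: polynomials in the variables `x¹,…,xⁿ` (indexed by
`Sum.inl`) and `ξ₁,…,ξₙ` (indexed by `Sum.inr`). -/
abbrev Pol (n : ℕ) := MvPolynomial (Fin n ⊕ Fin n) ℝ

/-- The divergence operator `Div = Σᵢ ∂ₓᵢ ∂_{ξᵢ}`. -/
noncomputable def divOp {n : ℕ} (P : Pol n) : Pol n :=
  ∑ i, MvPolynomial.pderiv (Sum.inl i) (MvPolynomial.pderiv (Sum.inr i) P)

/-- The Hamiltonian lift of `H`: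
`L_H = Σᵢ (∂_{ξᵢ}H ∂_{xᵢ} − ∂_{xᵢ}H ∂_{ξᵢ})`. -/
noncomputable def ham {n : ℕ} (H P : Pol n) : Pol n :=
  ∑ i, (MvPolynomial.pderiv (Sum.inr i) H * MvPolynomial.pderiv (Sum.inl i) P
        - MvPolynomial.pderiv (Sum.inl i) H * MvPolynomial.pderiv (Sum.inr i) P)

/-- The fiberwise Euler operator `E = Σᵢ ξᵢ ∂_{ξᵢ}`. -/
noncomputable def eulerXi {n : ℕ} (P : Pol n) : Pol n :=
  ∑ i, MvPolynomial.X (Sum.inr i) * MvPolynomial.pderiv (Sum.inr i) P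

/-- The quadratic vector field `X_s = x^s E`, as the function
`x^s Σⱼ xʲ ξⱼ` on `T*ℝⁿ`. -/
noncomputable def quadX {n : ℕ} (s : Fin n) : Pol n :=
  MvPolynomial.X (Sum.inl s) *
    ∑ j, MvPolynomial.X (Sum.inl j) * MvPolynomial.X (Sum.inr j)

theorem pderiv_comm' {σ R : Type*} [CommRing R] [DecidableEq σ] (i j : σ) (P : MvPolynomial σ R) :
    pderiv i (pderiv j P) = pderiv j (pderiv i P) := by
  induction P using MvPolynomial.induction_on with
  | C a => simp
  | add p q hp hq => simp [hp, hq]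
  | mul_X p k hp =>
    simp only [pderiv_mul, pderiv_X, map_add, hp, Pi.single_apply]
    split_ifs <;> (simp [hp]; try ring)

variable {n : ℕ}

theorem divOp_add (P Q : Pol n) : divOp (P + Q) = divOp P + divOp Q := by
  simp [divOp, Finset.sum_add_distrib]

theorem divOp_sub (P Q : Pol n) : divOp (P - Q) = divOp P - divOp Q := by
  simp [divOp, Finset.sum_sub_distrib]

theorem divOp_smul (c : ℝ) (P : Pol n) : divOp (c • P) = c • divOp P := by
  simp [divOp, Finset.smul_sum]

theorem divOp_sum {α : Type*} (t : Finset α) (f : α → Pol n) :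
    divOp (∑ a ∈ t, f a) = ∑ a ∈ t, divOp (f a) := by
  simp only [divOp, map_sum]
  rw [Finset.sum_comm]

theorem divOp_pderiv (v : Fin n ⊕ Fin n) (P : Pol n) :
    divOp (pderiv v P) = pderiv v (divOp P) := by
  simp only [divOp, map_sum]
  exact Finset.sum_congr rfl fun i _ => by
    rw [pderiv_comm' (Sum.inr i) v P, pderiv_comm' (Sum.inl i) v _]

theorem divOp_X_inl_mul (s : Fin n) (P : Pol n) :
    divOp (MvPolynomial.X (Sum.inl s) * P)
      = pderiv (Sum.inr s) P + MvPolynomial.X (Sum.inl s) * divOp P := by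
  simp [divOp, pderiv_mul, pderiv_X, Pi.single_apply, Finset.sum_add_distrib,
    Finset.mul_sum, Sum.inl.injEq, Finset.sum_ite_eq]
  ring

theorem divOp_X_inr_mul (s : Fin n) (P : Pol n) :
    divOp (MvPolynomial.X (Sum.inr s) * P)
      = pderiv (Sum.inl s) P + MvPolynomial.X (Sum.inr s) * divOp P := by
  simp [divOp, pderiv_mul, pderiv_X, Pi.single_apply, Finset.sum_add_distrib,
    Finset.mul_sum, Sum.inr.injEq, apply_ite]
  have h : ∀ x : Fin n, ((if s = x then X (Sum.inr s) * (pderiv (Sum.inl x)) ((pderiv (Sum.inr x)) P) + (pderiv (Sum.inl x)) P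
      else X (Sum.inr s) * (pderiv (Sum.inl x)) ((pderiv (Sum.inr x)) P)) : Pol n)
      = X (Sum.inr s) * (pderiv (Sum.inl x)) ((pderiv (Sum.inr x)) P) + (if s = x then (pderiv (Sum.inl x)) P else 0) := by
    intro x; split_ifs <;> simp
  simp only [h, Finset.sum_add_distrib, Finset.sum_ite_eq, Finset.mem_univ, if_true]
  ring

noncomputable def eulerX {n : ℕ} (P : Pol n) : Pol n :=
  ∑ i, MvPolynomial.X (Sum.inl i) * MvPolynomial.pderiv (Sum.inl i) P
noncomputable def rPol (n : ℕ) : Pol n :=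
  ∑ j, MvPolynomial.X (Sum.inl j) * MvPolynomial.X (Sum.inr j)

theorem pderiv_inr_eulerXi (t : Fin n) (P : Pol n) :
    pderiv (Sum.inr t) (eulerXi P)
      = pderiv (Sum.inr t) P + eulerXi (pderiv (Sum.inr t) P) := by
  unfold eulerXi
  rw [map_sum]
  have h : ∀ i : Fin n, pderiv (Sum.inr t) (X (Sum.inr i) * pderiv (Sum.inr i) P)
      = (if t = i then pderiv (Sum.inr i) P else 0)
        + X (Sum.inr i) * pderiv (Sum.inr i) (pderiv (Sum.inr t) P) := by
    intro i
    rw [pderiv_mul, pderiv_comm' (Sum.inr i) (Sum.inr t) P]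
    simp [pderiv_X, Pi.single_apply, Sum.inr.injEq, eq_comm]
  simp [h, Finset.sum_add_distrib, Finset.sum_ite_eq]

theorem pderiv_inr_eulerX (t : Fin n) (P : Pol n) :
    pderiv (Sum.inr t) (eulerX P) = eulerX (pderiv (Sum.inr t) P) := by
  unfold eulerX
  rw [map_sum]
  refine Finset.sum_congr rfl fun i _ => ?_
  rw [pderiv_mul, pderiv_comm' (Sum.inl i) (Sum.inr t) P]
  simp

theorem divOp_eulerX (P : Pol n) :
    divOp (eulerX P) = divOp P + eulerX (divOp P) := by
  unfold eulerX
  rw [divOp_sum]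
  have h : ∀ i : Fin n, divOp (X (Sum.inl i) * pderiv (Sum.inl i) P)
      = pderiv (Sum.inl i) (pderiv (Sum.inr i) P)
        + X (Sum.inl i) * pderiv (Sum.inl i) (divOp P) := by
    intro i
    rw [divOp_X_inl_mul, divOp_pderiv, pderiv_comm' (Sum.inr i) (Sum.inl i) P]
  simp only [h]
  rw [Finset.sum_add_distrib]
  rfl

theorem divOp_eulerXi (P : Pol n) :
    divOp (eulerXi P) = divOp P + eulerXi (divOp P) := by
  unfold eulerXi
  rw [divOp_sum]
  have h : ∀ i : Fin n, divOp (X (Sum.inr i) * pderiv (Sum.inr i) P)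
      = pderiv (Sum.inl i) (pderiv (Sum.inr i) P)
        + X (Sum.inr i) * pderiv (Sum.inr i) (divOp P) := by
    intro i
    rw [divOp_X_inr_mul, divOp_pderiv]
  simp only [h]
  rw [Finset.sum_add_distrib]
  rfl

theorem divOp_rPol_mul (P : Pol n) :
    divOp (rPol n * P)
      = (n : ℝ) • P + eulerXi P + eulerX P + rPol n * divOp P := by
  rw [rPol, Finset.sum_mul, divOp_sum]
  have h : ∀ j : Fin n, divOp (X (Sum.inl j) * X (Sum.inr j) * P)
      = P + X (Sum.inr j) * pderiv (Sum.inr j) P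
        + X (Sum.inl j) * pderiv (Sum.inl j) P
        + X (Sum.inl j) * X (Sum.inr j) * divOp P := by
    intro j
    rw [mul_assoc, divOp_X_inl_mul, divOp_X_inr_mul, pderiv_mul]
    simp [pderiv_X, mul_add, mul_assoc]
    ring
  calc ∑ j : Fin n, divOp (X (Sum.inl j) * X (Sum.inr j) * P)
      = ∑ j : Fin n, (P + X (Sum.inr j) * pderiv (Sum.inr j) P
        + X (Sum.inl j) * pderiv (Sum.inl j) P
        + X (Sum.inl j) * X (Sum.inr j) * divOp P) := Finset.sum_congr rfl fun j _ => h j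
    _ = (n : ℝ) • P + eulerXi P + eulerX P + rPol n * divOp P := by
        simp only [Finset.sum_add_distrib, eulerXi, eulerX, rPol, Finset.sum_mul]
        rw [Finset.sum_const, Finset.card_univ, Fintype.card_fin]
        norm_num [← Nat.cast_smul_eq_nsmul ℝ]


theorem pderiv_inr_quadX (s i : Fin n) :
    pderiv (Sum.inr i) (quadX s) = X (Sum.inl s) * X (Sum.inl i) := by
  unfold quadX
  rw [pderiv_mul]
  simp [pderiv_X, Pi.single_apply, Finset.mul_sum, apply_ite, Finset.sum_ite_eq,
    Sum.inr.injEq, eq_comm]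

theorem pderiv_inl_quadX (s i : Fin n) :
    pderiv (Sum.inl i) (quadX s)
      = (if i = s then rPol n else 0) + X (Sum.inl s) * X (Sum.inr i) := by
  unfold quadX
  rw [pderiv_mul]
  simp only [pderiv_X, Pi.single_apply, Sum.inl.injEq, map_sum, pderiv_mul]
  simp [apply_ite, Finset.sum_ite_eq, Sum.inl.injEq, eq_comm, rPol, ite_mul,
    Finset.mul_sum, Finset.sum_add_distrib, mul_comm]

theorem ham_quadX_eq (s : Fin n) (P : Pol n) :
    ham (quadX s) P
      = X (Sum.inl s) * eulerX P - rPol n * pderiv (Sum.inr s) P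
        - X (Sum.inl s) * eulerXi P := by
  unfold ham
  have h : ∀ i : Fin n,
      (pderiv (Sum.inr i) (quadX s) * pderiv (Sum.inl i) P
        - pderiv (Sum.inl i) (quadX s) * pderiv (Sum.inr i) P)
      = X (Sum.inl s) * (X (Sum.inl i) * pderiv (Sum.inl i) P)
        - (if i = s then rPol n * pderiv (Sum.inr s) P else 0)
        - X (Sum.inl s) * (X (Sum.inr i) * pderiv (Sum.inr i) P) := by
    intro i
    rw [pderiv_inr_quadX, pderiv_inl_quadX]
    split_ifs with hi
    · subst hi; ring
    · ring
  simp only [h, Finset.sum_sub_distrib, Finset.sum_ite_eq', Finset.mem_univ, if_true,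
    ← Finset.mul_sum]
  rfl

theorem key_comm (s : Fin n) (P : Pol n) :
    ham (quadX s) (divOp P) - divOp (ham (quadX s) P)
      = (2:ℝ) • eulerXi (pderiv (Sum.inr s) P) + ((n:ℝ)+1) • pderiv (Sum.inr s) P := by
  rw [ham_quadX_eq, ham_quadX_eq, divOp_sub, divOp_sub,
      divOp_X_inl_mul, divOp_eulerX, divOp_rPol_mul, divOp_X_inl_mul, divOp_eulerXi,
      pderiv_inr_eulerX, pderiv_inr_eulerXi, divOp_pderiv]
  simp only [smul_eq_C_mul, map_add, map_one, map_ofNat]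
  ring

theorem eulerXi_pderiv_inr_eig {c : ℝ} (t : Fin n) {P : Pol n}
    (h : eulerXi P = c • P) :
    eulerXi (pderiv (Sum.inr t) P) = (c - 1) • pderiv (Sum.inr t) P := by
  have := pderiv_inr_eulerXi t P
  rw [h, Derivation.map_smul] at this
  rw [sub_smul, one_smul]
  linear_combination (norm := module) -this

theorem eulerXi_divOp_eig {c : ℝ} {P : Pol n}
    (h : eulerXi P = c • P) :
    eulerXi (divOp P) = (c - 1) • divOp P := by
  have := divOp_eulerXi P
  rw [h, divOp_smul] at this
  rw [sub_smul, one_smul]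
  linear_combination (norm := module) -this

theorem eulerXi_divOp_iter_eig {c : ℝ} (m : ℕ) {P : Pol n}
    (h : eulerXi P = c • P) :
    eulerXi (divOp^[m] P) = (c - m) • divOp^[m] P := by
  induction m with
  | zero => simpa using h
  | succ m ih =>
    rw [Function.iterate_succ_apply', eulerXi_divOp_eig ih]
    congr 1
    push_cast
    ring

theorem pderiv_divOp_iter (v : Fin n ⊕ Fin n) (m : ℕ) (P : Pol n) :
    pderiv v (divOp^[m] P) = divOp^[m] (pderiv v P) := by
  induction m with
  | zero => rfl
  | succ m ih =>
    rw [Function.iterate_succ_apply', Function.iterate_succ_apply',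
      ← divOp_pderiv, ih]

theorem divOp_iter_smul (m : ℕ) (c : ℝ) (P : Pol n) :
    divOp^[m] (c • P) = c • divOp^[m] P := by
  induction m with
  | zero => rfl
  | succ m ih =>
    rw [Function.iterate_succ_apply', Function.iterate_succ_apply', ih, divOp_smul]

/-- on `S^k` (polynomials homogeneous of degree `k` in `ξ`,
characterized by the Euler identity `E P = k P`), one has
`[L_{X_s}, Div^m] = m(2k − m + n) Div^{m−1} ∘ ∂_{ξ_s}`. -/
theorem ham_quadX_divOp_pow_comm {n : ℕ} (s : Fin n) (k m : ℕ) (P : Pol n)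
    (hP : eulerXi P = (k : ℝ) • P) :
    ham (quadX s) (divOp^[m] P) - divOp^[m] (ham (quadX s) P)
      = ((m : ℝ) * (2 * (k : ℝ) - (m : ℝ) + (n : ℝ))) •
          divOp^[m - 1] (MvPolynomial.pderiv (Sum.inr s) P) := by
  induction m with
  | zero => simp
  | succ m ih =>
    have hQ : eulerXi (divOp^[m] P) = ((k : ℝ) - m) • divOp^[m] P :=
      eulerXi_divOp_iter_eig m hP
    have h1 := key_comm s (divOp^[m] P)
    have h2 : eulerXi (pderiv (Sum.inr s) (divOp^[m] P))
        = ((k : ℝ) - m - 1) • pderiv (Sum.inr s) (divOp^[m] P) :=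
      eulerXi_pderiv_inr_eig s hQ
    have h3 : pderiv (Sum.inr s) (divOp^[m] P)
        = divOp^[m] (pderiv (Sum.inr s) P) := pderiv_divOp_iter _ m P
    have h5 : ((m : ℝ) * (2 * (k : ℝ) - m + n)) •
          divOp (divOp^[m - 1] (pderiv (Sum.inr s) P))
        = ((m : ℝ) * (2 * (k : ℝ) - m + n)) •
          divOp^[m] (pderiv (Sum.inr s) P) := by
      cases m with
      | zero => simp
      | succ m' =>
        rw [show m' + 1 - 1 = m' from rfl, ← Function.iterate_succ_apply' divOp m']
    rw [Function.iterate_succ_apply' divOp m P,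
      Function.iterate_succ_apply' divOp m (ham (quadX s) P)]
    calc ham (quadX s) (divOp (divOp^[m] P)) - divOp (divOp^[m] (ham (quadX s) P))
        = (ham (quadX s) (divOp (divOp^[m] P)) - divOp (ham (quadX s) (divOp^[m] P)))
          + divOp (ham (quadX s) (divOp^[m] P) - divOp^[m] (ham (quadX s) P)) := by
          rw [divOp_sub]; abel
      _ = ((2 : ℝ) * ((k : ℝ) - m - 1) + ((n : ℝ) + 1)
            + (m : ℝ) * (2 * (k : ℝ) - m + n)) • divOp^[m] (pderiv (Sum.inr s) P) := by
          rw [h1, h2, h3, ih, divOp_smul, h5, smul_smul, ← add_smul, ← add_smul]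
      _ = ((↑(m + 1) : ℝ) * (2 * (k : ℝ) - (↑(m + 1) : ℝ) + (n : ℝ))) •
            divOp^[m + 1 - 1] (MvPolynomial.pderiv (Sum.inr s) P) := by
          rw [show m + 1 - 1 = m from rfl]
          congr 1
          push_cast
          ring
end

section
/- There are no nonzero sl(n+1,ℝ)-equivariant linear maps S^k → S^ℓ for k ≠ ℓ: if T : S^k → S^ℓ is linear and satisfies T ∘ L_X = L_X ∘ T for all X ∈ sl(n+1,ℝ), and k ≠ ℓ, then T = 0. -/
open MvPolynomial
open scoped BigOperators

/-- The generators of the projective Lie algebra `sl(n+1,ℝ) ⊂ Vect(ℝⁿ)`,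
identified with fiberwise-linear functions on `T*ℝⁿ`:
`∂ᵢ ↦ ξᵢ`, `xⁱ∂ⱼ ↦ xⁱξⱼ`, `xⁱE ↦ xⁱ Σⱼ xʲξⱼ`. -/
noncomputable def slGens (n : ℕ) : Set (Pol n) :=
  {H | ∃ i : Fin n, H = MvPolynomial.X (Sum.inr i)} ∪
  {H | ∃ i j : Fin n, H = MvPolynomial.X (Sum.inl i) * MvPolynomial.X (Sum.inr j)} ∪
  {H | ∃ i : Fin n, H = quadX i}


lemma pd_comm {n : ℕ} (u v : Fin n ⊕ Fin n) (P : Pol n) :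
    pderiv u (pderiv v P) = pderiv v (pderiv u P) := by
  induction P using MvPolynomial.induction_on' with
  | add p q hp hq => simp [map_add, hp, hq]
  | monomial m a =>
    by_cases h : u = v
    · subst h; rfl
    · simp only [pderiv_monomial]
      rw [tsub_tsub, tsub_tsub, add_comm]
      congr 1
      rw [Finsupp.tsub_apply, Finsupp.tsub_apply, Finsupp.single_apply, Finsupp.single_apply]
      simp [h, Ne.symm h]
      ring

lemma pdl_B {n : ℕ} (t i j : Fin n) :
    pderiv (Sum.inl t) (X (Sum.inl i) * X (Sum.inr j) : Pol n)
      = if i = t then X (Sum.inr j) else 0 := by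
  rw [pderiv_mul]
  by_cases h : i = t <;> simp [h, pderiv_X_of_ne, Ne.symm]

lemma pdr_B {n : ℕ} (t i j : Fin n) :
    pderiv (Sum.inr t) (X (Sum.inl i) * X (Sum.inr j) : Pol n)
      = if j = t then X (Sum.inl i) else 0 := by
  rw [pderiv_mul]
  by_cases h : j = t <;> simp [h, pderiv_X_of_ne, Ne.symm]

lemma ham_B {n : ℕ} (i j : Fin n) (P : Pol n) :
    ham (X (Sum.inl i) * X (Sum.inr j)) P
      = X (Sum.inl i) * pderiv (Sum.inl j) P - X (Sum.inr j) * pderiv (Sum.inr i) P := by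
  simp only [ham, pdl_B, pdr_B, Finset.sum_sub_distrib, ite_mul, zero_mul, mul_ite, mul_zero,
    Finset.sum_ite_eq, Finset.mem_univ, if_true]

lemma ham_xi {n : ℕ} (s : Fin n) (P : Pol n) :
    ham (X (Sum.inr s)) P = pderiv (Sum.inl s) P := by
  simp [ham, Pi.single_apply, apply_ite, Finset.sum_ite_eq']


noncomputable def opF {n : ℕ} (P : Pol n) : Pol n :=
  ∑ i, MvPolynomial.X (Sum.inl i) * MvPolynomial.pderiv (Sum.inl i) P
noncomputable def rp (n : ℕ) : Pol n := ∑ j, X (Sum.inl j) * X (Sum.inr j)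

lemma pdl_rp {n : ℕ} (t : Fin n) : pderiv (Sum.inl t) (rp n) = X (Sum.inr t) := by
  simp only [rp, map_sum, pdl_B, Finset.sum_ite_eq', Finset.mem_univ, if_true]

lemma pdr_rp {n : ℕ} (t : Fin n) : pderiv (Sum.inr t) (rp n) = X (Sum.inl t) := by
  simp only [rp, map_sum, pdr_B, Finset.sum_ite_eq', Finset.mem_univ, if_true]

lemma pdl_quad {n : ℕ} (t s : Fin n) :
    pderiv (Sum.inl t) (quadX s)
      = (if s = t then rp n else 0) + X (Sum.inl s) * X (Sum.inr t) := by
  have : quadX s = X (Sum.inl s) * rp n := rfl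
  rw [this, pderiv_mul, pdl_rp]
  by_cases h : s = t <;> simp [h, pderiv_X_of_ne, Ne.symm]

lemma pdr_quad {n : ℕ} (t s : Fin n) :
    pderiv (Sum.inr t) (quadX s) = X (Sum.inl s) * X (Sum.inl t) := by
  have : quadX s = X (Sum.inl s) * rp n := rfl
  rw [this, pderiv_mul, pdr_rp]
  simp

lemma ham_quad {n : ℕ} (s : Fin n) (P : Pol n) :
    ham (quadX s) P
      = X (Sum.inl s) * (opF P - eulerXi P) - rp n * pderiv (Sum.inr s) P := by
  simp only [ham, pdl_quad, pdr_quad, opF, eulerXi, mul_sub, Finset.mul_sum,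
    Finset.sum_sub_distrib, add_mul, ite_mul, zero_mul, Finset.sum_add_distrib,
    Finset.sum_ite_eq, Finset.mem_univ, if_true]
  ring_nf

lemma nf1 {n : ℕ} (P : Pol n) : opF (opF P)
    = opF P + ∑ i, ∑ j, X (Sum.inl i) * (X (Sum.inl j)
        * pderiv (Sum.inl i) (pderiv (Sum.inl j) P)) := by
  simp only [opF, map_sum, pderiv_mul, pderiv_X, Pi.single_apply, Sum.inl.injEq,
    mul_add, Finset.mul_sum, Finset.sum_add_distrib, ite_mul, one_mul, zero_mul,
    mul_ite, mul_one, mul_zero, Finset.sum_ite_eq, Finset.sum_ite_eq',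
    Finset.mem_univ, if_true]

lemma nf3 {n : ℕ} (P : Pol n) : eulerXi (eulerXi P)
    = eulerXi P + ∑ i, ∑ j, X (Sum.inr i) * (X (Sum.inr j)
        * pderiv (Sum.inr i) (pderiv (Sum.inr j) P)) := by
  simp only [eulerXi, map_sum, pderiv_mul, pderiv_X, Pi.single_apply, Sum.inr.injEq,
    mul_add, Finset.mul_sum, Finset.sum_add_distrib, ite_mul, one_mul, zero_mul,
    mul_ite, mul_one, mul_zero, Finset.sum_ite_eq, Finset.sum_ite_eq',
    Finset.mem_univ, if_true]

lemma nf2 {n : ℕ} (P : Pol n) : opF (eulerXi P)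
    = ∑ i, ∑ j, X (Sum.inl i) * (X (Sum.inr j)
        * pderiv (Sum.inl i) (pderiv (Sum.inr j) P)) := by
  simp only [opF, eulerXi, map_sum, pderiv_mul, pderiv_X, Pi.single_apply,
    mul_add, Finset.mul_sum, Finset.sum_add_distrib, ite_mul, one_mul, zero_mul,
    mul_ite, mul_one, mul_zero, Finset.sum_ite_eq, Finset.sum_ite_eq',
    Finset.mem_univ, if_true, reduceCtorEq, if_false, add_zero, zero_add,
    Finset.sum_const_zero]

lemma nf2' {n : ℕ} (P : Pol n) : eulerXi (opF P)
    = ∑ i, ∑ j, X (Sum.inl i) * (X (Sum.inr j)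
        * pderiv (Sum.inl i) (pderiv (Sum.inr j) P)) := by
  simp only [opF, eulerXi, map_sum, pderiv_mul, pderiv_X, Pi.single_apply,
    mul_add, Finset.mul_sum, Finset.sum_add_distrib, ite_mul, one_mul, zero_mul,
    mul_ite, mul_one, mul_zero, Finset.sum_ite_eq, Finset.sum_ite_eq',
    Finset.mem_univ, if_true, reduceCtorEq, if_false, add_zero, zero_add,
    Finset.sum_const_zero]
  rw [Finset.sum_comm]
  refine Finset.sum_congr rfl fun i _ => Finset.sum_congr rfl fun j _ => ?_
  rw [pd_comm]
  ring

lemma nfRD {n : ℕ} (P : Pol n) : rp n * divOp P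
    = ∑ i, ∑ j, X (Sum.inl i) * (X (Sum.inr i)
        * pderiv (Sum.inl j) (pderiv (Sum.inr j) P)) := by
  simp only [rp, divOp, Finset.sum_mul, Finset.mul_sum, mul_assoc]
  rw [Finset.sum_comm]

lemma opF_sub {n : ℕ} (P Q : Pol n) : opF (P - Q) = opF P - opF Q := by
  simp [opF, map_sub, mul_sub, Finset.sum_sub_distrib]

lemma eulerXi_sub {n : ℕ} (P Q : Pol n) : eulerXi (P - Q) = eulerXi P - eulerXi Q := by
  simp [eulerXi, map_sub, mul_sub, Finset.sum_sub_distrib]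

lemma e1 {n : ℕ} (s : Fin n) (P : Pol n) :
    eulerXi (pderiv (Sum.inl s) P) = pderiv (Sum.inl s) (eulerXi P) := by
  simp only [eulerXi, map_sum, pderiv_mul, pderiv_X_of_ne (by simp : (Sum.inr _ : Fin n ⊕ Fin n) ≠ Sum.inl s), zero_mul, zero_add]
  exact Finset.sum_congr rfl fun i _ => by rw [pd_comm]

lemma f1 {n : ℕ} (s : Fin n) (P : Pol n) :
    opF (pderiv (Sum.inl s) P) = pderiv (Sum.inl s) (opF P) - pderiv (Sum.inl s) P := by
  simp only [opF, map_sum, pderiv_mul, pderiv_X, Pi.single_apply, Sum.inl.injEq,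
    ite_mul, one_mul, zero_mul, Finset.sum_add_distrib, Finset.sum_ite_eq,
    Finset.mem_univ, if_true, Finset.sum_ite_eq']
  rw [add_sub_cancel_left]
  exact Finset.sum_congr rfl fun i _ => by rw [pd_comm]

lemma ham_sumH {n : ℕ} (H : Fin n → Pol n) (P : Pol n) :
    ham (∑ j, H j) P = ∑ j, ham (H j) P := by
  simp only [ham, map_sum, Finset.sum_mul, Finset.sum_sub_distrib]
  rw [Finset.sum_comm]
  refine congrArg₂ (· - ·) rfl ?_
  rw [Finset.sum_comm]

lemma ham_rp {n : ℕ} (P : Pol n) : ham (rp n) P = opF P - eulerXi P := by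
  rw [rp, ham_sumH]
  simp only [ham_B, opF, eulerXi, Finset.sum_sub_distrib]

lemma comm_EF {n : ℕ} (P : Pol n) : eulerXi (opF P) = opF (eulerXi P) := by
  rw [nf2', nf2]

lemma p4 {n : ℕ} (P : Pol n) : ham (rp n) (ham (rp n) P)
    = opF (opF P) - opF (eulerXi P) - opF (eulerXi P) + eulerXi (eulerXi P) := by
  rw [ham_rp, ham_rp, opF_sub, eulerXi_sub, comm_EF]
  ring

lemma p1 {n : ℕ} (P : Pol n) : ∑ s, ham (X (Sum.inr s)) (ham (quadX s) P)
    = n • (opF P - eulerXi P) + (opF (opF P) - opF (eulerXi P))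
      - eulerXi P - rp n * divOp P := by
  simp only [ham_xi, ham_quad, map_sub, pderiv_mul, pderiv_X_self, one_mul, pdl_rp]
  rw [Finset.sum_sub_distrib, Finset.sum_add_distrib, Finset.sum_add_distrib, sub_sub]
  congr 1
  · congr 1
    · rw [Finset.sum_const, Finset.card_univ, Fintype.card_fin]
    · rw [← opF_sub]; exact Finset.sum_congr rfl fun s _ => by rw [map_sub]
  · congr 1
    rw [divOp, Finset.mul_sum]

lemma p2 {n : ℕ} (P : Pol n) : ∑ s, ham (quadX s) (ham (X (Sum.inr s)) P)
    = opF (opF P) - opF P - opF (eulerXi P) - rp n * divOp P := by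
  simp only [ham_xi, ham_quad]
  rw [Finset.sum_sub_distrib]
  congr 1
  · calc ∑ s, X (Sum.inl s) * (opF (pderiv (Sum.inl s) P) - eulerXi (pderiv (Sum.inl s) P))
        = ∑ s, (X (Sum.inl s) * pderiv (Sum.inl s) (opF P)
            - (X (Sum.inl s) * pderiv (Sum.inl s) P
              + X (Sum.inl s) * pderiv (Sum.inl s) (eulerXi P))) := by
          refine Finset.sum_congr rfl fun s _ => ?_
          rw [f1, e1]; ring
      _ = opF (opF P) - (opF P + opF (eulerXi P)) := by
          rw [Finset.sum_sub_distrib, Finset.sum_add_distrib]; rfl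
      _ = opF (opF P) - opF P - opF (eulerXi P) := by rw [sub_add_eq_sub_sub]
  · rw [divOp, Finset.mul_sum]
    exact Finset.sum_congr rfl fun s _ => by rw [pd_comm]

lemma p3 {n : ℕ} (P : Pol n) :
    ∑ i, ∑ j, ham (X (Sum.inl i) * X (Sum.inr j)) (ham (X (Sum.inl j) * X (Sum.inr i)) P)
    = n • opF P + (opF (opF P) - opF P) - rp n * divOp P - rp n * divOp P
      + n • eulerXi P + (eulerXi (eulerXi P) - eulerXi P) := by
  have hterm : ∀ i j : Fin n,
      ham (X (Sum.inl i) * X (Sum.inr j)) (ham (X (Sum.inl j) * X (Sum.inr i)) P)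
      = X (Sum.inl i) * pderiv (Sum.inl i) P
        + X (Sum.inl i) * (X (Sum.inl j) * pderiv (Sum.inl i) (pderiv (Sum.inl j) P))
        - X (Sum.inl i) * (X (Sum.inr i) * pderiv (Sum.inl j) (pderiv (Sum.inr j) P))
        - X (Sum.inl j) * (X (Sum.inr j) * pderiv (Sum.inl i) (pderiv (Sum.inr i) P))
        + X (Sum.inr j) * pderiv (Sum.inr j) P
        + X (Sum.inr i) * (X (Sum.inr j) * pderiv (Sum.inr i) (pderiv (Sum.inr j) P)) := by
    intro i j
    rw [ham_B, ham_B, map_sub, map_sub, pderiv_mul, pderiv_mul, pderiv_mul, pderiv_mul,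
      pderiv_X_self, pderiv_X_self, pderiv_X_of_ne (by simp), pderiv_X_of_ne (by simp),
      pd_comm (Sum.inl j) (Sum.inl i) P, pd_comm (Sum.inr i) (Sum.inl i) P]
    ring
  rw [Finset.sum_congr rfl fun i _ => Finset.sum_congr rfl fun j _ => hterm i j]
  simp only [Finset.sum_add_distrib, Finset.sum_sub_distrib]
  congr 1
  congr 1
  congr 1
  congr 1
  congr 1
  · -- sum of T1
    simp only [Finset.sum_const, Finset.card_univ, Fintype.card_fin, Finset.smul_sum]
    rw [← Finset.smul_sum]; rfl
  · -- T2
    rw [nf1 P, add_sub_cancel_left]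
  · -- T3
    rw [← nfRD]
  · -- T4
    rw [Finset.sum_comm, ← nfRD]
  · -- T5
    rw [Finset.sum_comm]
    simp only [Finset.sum_const, Finset.card_univ, Fintype.card_fin]
    rw [← Finset.smul_sum]; rfl
  · -- T6
    rw [nf3 P, add_sub_cancel_left]

lemma casimir {n : ℕ} (P : Pol n) :
    (∑ i, ∑ j, ham (X (Sum.inl i) * X (Sum.inr j)) (ham (X (Sum.inl j) * X (Sum.inr i)) P))
    + ham (rp n) (ham (rp n) P)
    - ∑ s, ham (X (Sum.inr s)) (ham (quadX s) P)
    - ∑ s, ham (quadX s) (ham (X (Sum.inr s)) P)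
    = 2 • eulerXi (eulerXi P) + (2 * n) • eulerXi P := by
  rw [p1, p2, p3, p4, mul_smul]
  simp only [smul_sub, two_smul]
  abel

lemma eulerXi_smul {n : ℕ} (c : ℝ) (P : Pol n) : eulerXi (c • P) = c • eulerXi P := by
  simp [eulerXi, map_smul, Finset.smul_sum, mul_smul_comm]

lemma opF_smul {n : ℕ} (c : ℝ) (P : Pol n) : opF (c • P) = c • opF P := by
  simp [opF, map_smul, Finset.smul_sum, mul_smul_comm]

lemma eulerXi_sum {n : ℕ} {α : Type*} (s : Finset α) (f : α → Pol n) :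
    eulerXi (∑ j ∈ s, f j) = ∑ j ∈ s, eulerXi (f j) := by
  simp only [eulerXi, map_sum, Finset.mul_sum]
  rw [Finset.sum_comm]

lemma e2 {n : ℕ} (i : Fin n) (Q : Pol n) :
    eulerXi (X (Sum.inl i) * Q) = X (Sum.inl i) * eulerXi Q := by
  simp only [eulerXi, pderiv_mul,
    pderiv_X_of_ne (by simp : (Sum.inl i : Fin n ⊕ Fin n) ≠ Sum.inr _), zero_mul, zero_add,
    Finset.mul_sum]
  exact Finset.sum_congr rfl fun s _ => by ring

lemma e3 {n : ℕ} (j : Fin n) (Q : Pol n) :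
    eulerXi (X (Sum.inr j) * Q) = X (Sum.inr j) * Q + X (Sum.inr j) * eulerXi Q := by
  simp only [eulerXi, pderiv_mul, pderiv_X, Pi.single_apply, Sum.inr.injEq,
    ite_mul, one_mul, zero_mul, mul_add, Finset.sum_add_distrib, mul_ite, mul_zero,
    Finset.sum_ite_eq, Finset.mem_univ, if_true, Finset.mul_sum]
  congr 1
  exact Finset.sum_congr rfl fun s _ => by ring

lemma e4 {n : ℕ} (s : Fin n) (Q : Pol n) :
    eulerXi (pderiv (Sum.inr s) Q)
      = pderiv (Sum.inr s) (eulerXi Q) - pderiv (Sum.inr s) Q := by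
  simp only [eulerXi, map_sum, pderiv_mul, pderiv_X, Pi.single_apply, Sum.inr.injEq,
    ite_mul, one_mul, zero_mul, Finset.sum_add_distrib, Finset.sum_ite_eq',
    Finset.mem_univ, if_true]
  rw [add_sub_cancel_left]
  exact Finset.sum_congr rfl fun i _ => by rw [pd_comm]

lemma e5 {n : ℕ} (Q : Pol n) :
    eulerXi (rp n * Q) = rp n * Q + rp n * eulerXi Q := by
  rw [rp, Finset.sum_mul, eulerXi_sum]
  simp only [mul_assoc, e2, e3]
  simp only [← mul_assoc, ← Finset.sum_mul, mul_add, Finset.sum_add_distrib]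

section pres
variable {n : ℕ} {k : ℝ} {P : Pol n}

lemma pres_xi (hP : eulerXi P = k • P) (s : Fin n) :
    eulerXi (ham (X (Sum.inr s)) P) = k • ham (X (Sum.inr s)) P := by
  simp only [ham_xi, e1, hP, Derivation.map_smul]

lemma pres_B (hP : eulerXi P = k • P) (i j : Fin n) :
    eulerXi (ham (X (Sum.inl i) * X (Sum.inr j)) P)
      = k • ham (X (Sum.inl i) * X (Sum.inr j)) P := by
  simp only [ham_B, eulerXi_sub, e2, e1, e3, e4, hP, Derivation.map_smul]
  simp only [smul_eq_C_mul]
  ring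

lemma pres_rp (hP : eulerXi P = k • P) :
    eulerXi (ham (rp n) P) = k • ham (rp n) P := by
  simp only [ham_rp, eulerXi_sub, comm_EF, hP, eulerXi_smul, opF_smul]
  simp only [smul_eq_C_mul]
  ring

lemma pres_quad (hP : eulerXi P = k • P) (s : Fin n) :
    eulerXi (ham (quadX s) P) = k • ham (quadX s) P := by
  simp only [ham_quad, eulerXi_sub, e2, e5, e4, comm_EF, hP, eulerXi_smul, opF_smul,
    Derivation.map_smul]
  simp only [smul_eq_C_mul]
  ring

end pres

lemma scalar_casimir {n : ℕ} (c : ℝ) (Q : Pol n) (hQ : eulerXi Q = c • Q) :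
    (∑ i, ∑ j, ham (X (Sum.inl i) * X (Sum.inr j)) (ham (X (Sum.inl j) * X (Sum.inr i)) Q))
    + ham (rp n) (ham (rp n) Q)
    - ∑ s, ham (X (Sum.inr s)) (ham (quadX s) Q)
    - ∑ s, ham (quadX s) (ham (X (Sum.inr s)) Q)
    = (2*c*c + 2*(n:ℝ)*c) • Q := by
  rw [casimir, hQ, eulerXi_smul, hQ]
  module

lemma cas_ne {n : ℕ} (k l : ℕ) (hkl : k ≠ l) :
    (2*(k:ℝ)*k + 2*(n:ℝ)*k) - (2*(l:ℝ)*l + 2*(n:ℝ)*l) ≠ 0 := by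
  have h : ∀ a b : ℕ, a < b → 2*(a:ℝ)*a + 2*(n:ℝ)*a < 2*(b:ℝ)*b + 2*(n:ℝ)*b := by
    intro a b hab
    have h1 : (a:ℝ) < b := by exact_mod_cast hab
    have h2 : (0:ℝ) ≤ a := Nat.cast_nonneg a
    have h3 : (0:ℝ) ≤ n := Nat.cast_nonneg n
    nlinarith
  rcases hkl.lt_or_gt with h' | h'
  · exact sub_ne_zero.mpr (ne_of_lt (h k l h'))
  · exact sub_ne_zero.mpr (ne_of_gt (h l k h'))


/-- there are no nonzero `sl(n+1,ℝ)`-equivariant linear maps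
`S^k → S^ℓ` for `k ≠ ℓ`: a linear map sending `S^k` to `S^ℓ` and commuting
on `S^k` with the Hamiltonian lifts of all elements of `sl(n+1,ℝ)`
vanishes on `S^k`. -/
theorem sl_equivariant_map_eq_zero {n : ℕ} (hn : 1 ≤ n) (k l : ℕ) (hkl : k ≠ l)
    (T : Pol n →ₗ[ℝ] Pol n)
    (hdeg : ∀ P : Pol n, eulerXi P = (k : ℝ) • P →
      eulerXi (T P) = (l : ℝ) • T P)
    (hequiv : ∀ H ∈ slGens n, ∀ P : Pol n, eulerXi P = (k : ℝ) • P →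
      T (ham H P) = ham H (T P)) :
    ∀ P : Pol n, eulerXi P = (k : ℝ) • P → T P = 0 := by
  intro P hP
  have m1 : ∀ i : Fin n, X (Sum.inr i) ∈ slGens n := fun i => Or.inl (Or.inl ⟨i, rfl⟩)
  have m2 : ∀ i j : Fin n, X (Sum.inl i) * X (Sum.inr j) ∈ slGens n :=
    fun i j => Or.inl (Or.inr ⟨i, j, rfl⟩)
  have m3 : ∀ i : Fin n, quadX i ∈ slGens n := fun i => Or.inr ⟨i, rfl⟩
  have hrp : ∀ Q : Pol n, eulerXi Q = (k : ℝ) • Q → T (ham (rp n) Q) = ham (rp n) (T Q) := by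
    intro Q hQ
    rw [rp, ham_sumH, map_sum, ham_sumH]
    exact Finset.sum_congr rfl fun t _ => hequiv _ (m2 t t) Q hQ
  have hT : T ((∑ i, ∑ j, ham (X (Sum.inl i) * X (Sum.inr j))
        (ham (X (Sum.inl j) * X (Sum.inr i)) P))
      + ham (rp n) (ham (rp n) P)
      - ∑ s, ham (X (Sum.inr s)) (ham (quadX s) P)
      - ∑ s, ham (quadX s) (ham (X (Sum.inr s)) P))
      = (∑ i, ∑ j, ham (X (Sum.inl i) * X (Sum.inr j))
        (ham (X (Sum.inl j) * X (Sum.inr i)) (T P)))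
      + ham (rp n) (ham (rp n) (T P))
      - ∑ s, ham (X (Sum.inr s)) (ham (quadX s) (T P))
      - ∑ s, ham (quadX s) (ham (X (Sum.inr s)) (T P)) := by
    simp only [map_sub, map_add, map_sum]
    congr 1
    congr 1
    congr 1
    · refine Finset.sum_congr rfl fun i _ => Finset.sum_congr rfl fun j _ => ?_
      rw [hequiv _ (m2 i j) _ (pres_B hP j i), hequiv _ (m2 j i) P hP]
    · rw [hrp _ (pres_rp hP), hrp P hP]
    · refine Finset.sum_congr rfl fun s _ => ?_
      rw [hequiv _ (m1 s) _ (pres_quad hP s), hequiv _ (m3 s) P hP]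
    · refine Finset.sum_congr rfl fun s _ => ?_
      rw [hequiv _ (m3 s) _ (pres_xi hP s), hequiv _ (m1 s) P hP]
  rw [scalar_casimir (k:ℝ) P hP, scalar_casimir (l:ℝ) (T P) (hdeg P hP), map_smul] at hT
  have h0 : ((2*(k:ℝ)*k + 2*(n:ℝ)*k) - (2*(l:ℝ)*l + 2*(n:ℝ)*l)) • T P = 0 := by
    rw [sub_smul, hT, sub_self]
  have hc := cas_ne (n := n) k l hkl
  have := congrArg (fun Q : Pol n => (((2*(k:ℝ)*k + 2*(n:ℝ)*k) - (2*(l:ℝ)*l + 2*(n:ℝ)*l))⁻¹ : ℝ) • Q) h0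
  simpa [smul_smul, inv_mul_cancel₀ hc] using this
end

section
/- For a second-order differential operator A = a_2^{ij}∂_i∂_j + a_1^i∂_i + a_0 on λ-densities on ℝ^n, the sl(n+1)-equivariant symbol is σ_λ(A) = ā_2^{ij}ξ_iξ_j + ā_1^iξ_i + ā_0 with ā_2^{ij} = a_2^{ij}, ā_1^i = a_1^i − 2((n+1)λ+1)/(n+3) ∂_j a_2^{ij}, and ā_0 = a_0 − λ∂_i a_1^i + λ((n+1)λ+1)/(n+2) ∂_i∂_j a_2^{ij}; i.e., the general formula c_ℓ^k = (−1)^{k−ℓ} binom(k,ℓ)binom((n+1)λ+k−1,k−ℓ)/binom(k+ℓ+n,k−ℓ) specializes for k = 2 to c_1^2 = −2((n+1)λ+1)/(n+3) and c_0^2 = λ((n+1)λ+1)/(n+2). -/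
open scoped BigOperators

/-- Generalized binomial coefficient `binom(α, m) = α(α−1)⋯(α−m+1)/m!`. -/
noncomputable def gbinom (α : ℝ) (m : ℕ) : ℝ :=
  (∏ j ∈ Finset.range m, (α - (j : ℝ))) / (m.factorial : ℝ)

/-- The closed-form symbol coefficients
`c_ℓ^k = (−1)^{k−ℓ} binom(k,ℓ) binom((n+1)λ+k−1, k−ℓ) / binom(k+ℓ+n, k−ℓ)`. -/
noncomputable def symbCoeff (n : ℕ) (lam : ℝ) (ℓ k : ℕ) : ℝ :=
  (-1 : ℝ) ^ (k - ℓ) * gbinom (k : ℝ) ℓ *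
    gbinom (((n : ℝ) + 1) * lam + (k : ℝ) - 1) (k - ℓ) /
    gbinom ((k : ℝ) + (ℓ : ℝ) + (n : ℝ)) (k - ℓ)

/-- Partial derivative `∂ᵢ f` of a function on `ℝⁿ`. -/
noncomputable def pd {n : ℕ} (i : Fin n) (f : (Fin n → ℝ) → ℝ) :
    (Fin n → ℝ) → ℝ :=
  fun x => fderiv ℝ f x (Pi.single i 1)

/-- for a second order operator
`A = a₂^{ij}∂ᵢ∂ⱼ + a₁^i∂ᵢ + a₀` on `λ`-densities, the `sl(n+1)`-equivariant
symbol `σ_λ(A) = ā₂^{ij}ξᵢξⱼ + ā₁^iξᵢ + ā₀` is given by `ā₂ = a₂`,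
`ā₁^i = a₁^i − 2((n+1)λ+1)/(n+3) ∂ⱼ a₂^{ij}` and
`ā₀ = a₀ − λ ∂ᵢ a₁^i + λ((n+1)λ+1)/(n+2) ∂ᵢ∂ⱼ a₂^{ij}`; i.e., the general
coefficients specialize to `c₂² = 1`, `c₁² = −2((n+1)λ+1)/(n+3)`,
`c₀² = λ((n+1)λ+1)/(n+2)`, `c₁¹ = 1`, `c₀¹ = −λ`, `c₀⁰ = 1`. -/
theorem second_order_symbol (n : ℕ) (hn : 1 ≤ n) (lam : ℝ) :
    symbCoeff n lam 2 2 = 1 ∧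
    symbCoeff n lam 1 2 = -(2 * (((n : ℝ) + 1) * lam + 1) / ((n : ℝ) + 3)) ∧
    symbCoeff n lam 0 2 = lam * (((n : ℝ) + 1) * lam + 1) / ((n : ℝ) + 2) ∧
    symbCoeff n lam 1 1 = 1 ∧
    symbCoeff n lam 0 1 = -lam ∧
    symbCoeff n lam 0 0 = 1 ∧
    (∀ (a2 : (Fin n → ℝ) → Fin n → Fin n → ℝ) (a1 : (Fin n → ℝ) → Fin n → ℝ)
        (a0 : (Fin n → ℝ) → ℝ) (x : Fin n → ℝ),
      (∀ i : Fin n,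
        symbCoeff n lam 1 1 * a1 x i +
          symbCoeff n lam 1 2 * ∑ j, pd j (fun y => a2 y i j) x
        = a1 x i - 2 * (((n : ℝ) + 1) * lam + 1) / ((n : ℝ) + 3) *
            ∑ j, pd j (fun y => a2 y i j) x) ∧
      (symbCoeff n lam 0 0 * a0 x +
          symbCoeff n lam 0 1 * (∑ i, pd i (fun y => a1 y i) x) +
          symbCoeff n lam 0 2 * (∑ i, ∑ j, pd i (pd j (fun y => a2 y i j)) x)
        = a0 x - lam * (∑ i, pd i (fun y => a1 y i) x) +
            lam * (((n : ℝ) + 1) * lam + 1) / ((n : ℝ) + 2) *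
              (∑ i, ∑ j, pd i (pd j (fun y => a2 y i j)) x))) := by
  have hn2 : ((n:ℝ)+2) ≠ 0 := by positivity
  have hn3 : ((n:ℝ)+3) ≠ 0 := by positivity
  have hn1 : ((n:ℝ)+1) ≠ 0 := by positivity
  have h22 : symbCoeff n lam 2 2 = 1 := by
    simp [symbCoeff, gbinom, Finset.prod_range_succ]
    norm_num
  have h12 : symbCoeff n lam 1 2 = -(2 * (((n : ℝ) + 1) * lam + 1) / ((n : ℝ) + 3)) := by
    simp only [symbCoeff, gbinom, show (2:ℕ)-(1:ℕ)=1 from rfl,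
      Finset.prod_range_succ, Finset.prod_range_zero]
    push_cast
    field_simp
    ring_nf
    have h3' : (3 + (n:ℝ)) ≠ 0 := by positivity
    field_simp
    ring
  have h02 : symbCoeff n lam 0 2 = lam * (((n : ℝ) + 1) * lam + 1) / ((n : ℝ) + 2) := by
    simp only [symbCoeff, gbinom, show (2:ℕ)-(0:ℕ)=2 from rfl,
      Finset.prod_range_succ, Finset.prod_range_zero]
    push_cast
    rw [div_eq_div_iff]
    · simp [Nat.factorial]; ring
    · intro h
      rw [div_eq_zero_iff] at h
      rcases h with h | h
      · rcases mul_eq_zero.mp h with h | h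
        · exact hn2 (by linarith [show ((2:ℝ)+0+(n:ℝ))-0 = (n:ℝ)+2 by ring, h])
        · exact hn1 (by linarith [show ((2:ℝ)+0+(n:ℝ))-1 = (n:ℝ)+1 by ring, h])
      · norm_num at h
    · positivity
  have h11 : symbCoeff n lam 1 1 = 1 := by
    simp [symbCoeff, gbinom, Finset.prod_range_succ]
  have h01 : symbCoeff n lam 0 1 = -lam := by
    simp only [symbCoeff, gbinom, show (1:ℕ)-(0:ℕ)=1 from rfl,
      Finset.prod_range_succ, Finset.prod_range_zero]
    push_cast
    field_simp
    ring_nf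
    have h1' : (1 + (n:ℝ)) ≠ 0 := by positivity
    field_simp
    ring
  have h00 : symbCoeff n lam 0 0 = 1 := by
    simp [symbCoeff, gbinom]
  refine ⟨h22, h12, h02, h11, h01, h00, fun a2 a1 a0 x => ⟨fun i => ?_, ?_⟩⟩
  · rw [h11, h12]; ring
  · rw [h00, h01, h02]; ring
end

section
/- Let γ(X) denote the operator on S^k given by γ(X)(P) = contraction of P with the tensor ℓ̄(X)^h_{ij} = ∂_i∂_j X^h − (1/(n+1))(δ^h_i ∂_j + δ^h_j ∂_i)(∂_l X^l). Then ℓ̄ is a 1-cocycle on Vect(ℝ^n): ℓ̄([X,Y]) = L_X(ℓ̄(Y)) − L_Y(ℓ̄(X)) (Lie derivative of (2,1)-tensor fields), and ℓ̄(X) = 0 for every X in the projective Lie algebra sl(n+1,ℝ). -/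
open scoped BigOperators

/-- Lie bracket of vector fields on `ℝⁿ`. -/
noncomputable def vbracket {n : ℕ} (X Y : (Fin n → ℝ) → Fin n → ℝ) :
    (Fin n → ℝ) → Fin n → ℝ :=
  fun x k => ∑ i, (X x i * pd i (fun y => Y y k) x - Y x i * pd i (fun y => X y k) x)

/-- The divergence `∂ₗ X^l` of a vector field. -/
noncomputable def divVF {n : ℕ} (X : (Fin n → ℝ) → Fin n → ℝ) :
    (Fin n → ℝ) → ℝ :=
  fun x => ∑ l, pd l (fun y => X y l) x

/-- The tensor
`ℓ̄(X)^h_{ij} = ∂ᵢ∂ⱼX^h − (1/(n+1))(δ^h_i ∂ⱼ + δ^h_j ∂ᵢ)(∂ₗX^l)`. -/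
noncomputable def lbar {n : ℕ} (X : (Fin n → ℝ) → Fin n → ℝ) :
    (Fin n → ℝ) → Fin n → Fin n → Fin n → ℝ :=
  fun x h i j =>
    pd i (pd j (fun y => X y h)) x -
      (1 / ((n : ℝ) + 1)) *
        ((if h = i then (1:ℝ) else 0) * pd j (divVF X) x +
         (if h = j then (1:ℝ) else 0) * pd i (divVF X) x)

/-- The Lie derivative of a `(2,1)`-tensor field `T` along `X`:
`(L_X T)^h_{ij} = X^k∂ₖT^h_{ij} − T^k_{ij}∂ₖX^h + T^h_{kj}∂ᵢX^k + T^h_{ik}∂ⱼX^k`. -/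
noncomputable def lieTens {n : ℕ} (X : (Fin n → ℝ) → Fin n → ℝ)
    (T : (Fin n → ℝ) → Fin n → Fin n → Fin n → ℝ) :
    (Fin n → ℝ) → Fin n → Fin n → Fin n → ℝ :=
  fun x h i j =>
    (∑ k, X x k * pd k (fun y => T y h i j) x)
    - (∑ k, T x k i j * pd k (fun y => X y h) x)
    + (∑ k, T x h k j * pd i (fun y => X y k) x)
    + (∑ k, T x h i k * pd j (fun y => X y k) x)

/-- The projective generators `∂ᵢ`, `xⁱ∂ⱼ`, `xⁱ E` on `ℝⁿ`. -/
def projGenerators (n : ℕ) : Set ((Fin n → ℝ) → Fin n → ℝ) :=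
  {X | ∃ i : Fin n, X = fun _ => Pi.single i 1} ∪
  {X | ∃ i j : Fin n, X = fun x => Pi.single j (x i)} ∪
  {X | ∃ i : Fin n, X = fun x k => x i * x k}

namespace Lb
variable {n : ℕ}

/- ## basic pd calculus -/

lemma pd_add {f g : (Fin n → ℝ) → ℝ} {x : Fin n → ℝ} (i : Fin n)
    (hf : DifferentiableAt ℝ f x) (hg : DifferentiableAt ℝ g x) :
    pd i (fun y => f y + g y) x = pd i f x + pd i g x := by
  simp [pd, fderiv_fun_add hf hg]

lemma pd_sub {f g : (Fin n → ℝ) → ℝ} {x : Fin n → ℝ} (i : Fin n)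
    (hf : DifferentiableAt ℝ f x) (hg : DifferentiableAt ℝ g x) :
    pd i (fun y => f y - g y) x = pd i f x - pd i g x := by
  simp [pd, fderiv_fun_sub hf hg]

lemma pd_mul {f g : (Fin n → ℝ) → ℝ} {x : Fin n → ℝ} (i : Fin n)
    (hf : DifferentiableAt ℝ f x) (hg : DifferentiableAt ℝ g x) :
    pd i (fun y => f y * g y) x = f x * pd i g x + g x * pd i f x := by
  simp [pd, fderiv_fun_mul hf hg]

lemma pd_const_mul {f : (Fin n → ℝ) → ℝ} {x : Fin n → ℝ} (i : Fin n)
    (hf : DifferentiableAt ℝ f x) (c : ℝ) :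
    pd i (fun y => c * f y) x = c * pd i f x := by
  simp [pd, fderiv_const_mul hf c]

lemma pd_sum {ι : Type*} {s : Finset ι} {f : ι → (Fin n → ℝ) → ℝ} {x : Fin n → ℝ}
    (i : Fin n) (hf : ∀ k ∈ s, DifferentiableAt ℝ (f k) x) :
    pd i (fun y => ∑ k ∈ s, f k y) x = ∑ k ∈ s, pd i (f k) x := by
  simp [pd, fderiv_fun_sum hf]

lemma contDiff_pd {f : (Fin n → ℝ) → ℝ} (hf : ContDiff ℝ (⊤ : ℕ∞) f) (i : Fin n) :
    ContDiff ℝ (⊤ : ℕ∞) (pd i f) :=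
  (hf.fderiv_right (by simp)).clm_apply contDiff_const

lemma dAt {f : (Fin n → ℝ) → ℝ} (hf : ContDiff ℝ (⊤ : ℕ∞) f) (x : Fin n → ℝ) :
    DifferentiableAt ℝ f x :=
  (hf.differentiable (by simp)).differentiableAt

lemma pd_comm {f : (Fin n → ℝ) → ℝ} (hf : ContDiff ℝ (⊤ : ℕ∞) f) (i j : Fin n) (x : Fin n → ℝ) :
    pd i (pd j f) x = pd j (pd i f) x := by
  have hd : DifferentiableAt ℝ (fderiv ℝ f) x :=
    ((hf.fderiv_right (m := (⊤ : ℕ∞)) (by simp)).differentiable (by simp)).differentiableAt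
  have key : ∀ v w : Fin n → ℝ,
      fderiv ℝ (fun y => fderiv ℝ f y v) x w = fderiv ℝ (fderiv ℝ f) x w v := by
    intro v w
    have h1 : (fun y => fderiv ℝ f y v)
        = fun y => (ContinuousLinearMap.apply ℝ ℝ v) (fderiv ℝ f y) := rfl
    rw [h1, fderiv_comp' x ((ContinuousLinearMap.apply ℝ ℝ v).differentiableAt) hd]
    simp
  have hsymm : IsSymmSndFDerivAt ℝ f x :=
    (hf.contDiffAt).isSymmSndFDerivAt (by rw [minSmoothness_of_isRCLikeNormedField]; exact WithTop.coe_le_coe.mpr (le_top : (2:ℕ∞) ≤ ⊤))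
  unfold pd
  rw [key, key, hsymm]

/- ## symbols -/

noncomputable def p1 (Z : (Fin n → ℝ) → Fin n → ℝ) (a b : Fin n) : (Fin n → ℝ) → ℝ :=
  pd a (fun y => Z y b)
noncomputable def p2 (Z : (Fin n → ℝ) → Fin n → ℝ) (a b c : Fin n) : (Fin n → ℝ) → ℝ :=
  pd a (p1 Z b c)
noncomputable def p3 (Z : (Fin n → ℝ) → Fin n → ℝ) (a b c d : Fin n) : (Fin n → ℝ) → ℝ :=
  pd a (p2 Z b c d)

lemma p1_eq (Z : (Fin n → ℝ) → Fin n → ℝ) (a b : Fin n) :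
    pd a (fun y => Z y b) = p1 Z a b := rfl
lemma p2_eq (Z : (Fin n → ℝ) → Fin n → ℝ) (a b c : Fin n) :
    pd a (p1 Z b c) = p2 Z a b c := rfl

variable {Z X Y : (Fin n → ℝ) → Fin n → ℝ}

lemma h0 (hZ : ContDiff ℝ (⊤ : ℕ∞) Z) (k : Fin n) : ContDiff ℝ (⊤ : ℕ∞) (fun y => Z y k) :=
  contDiff_pi.mp hZ k
lemma h1 (hZ : ContDiff ℝ (⊤ : ℕ∞) Z) (a b : Fin n) : ContDiff ℝ (⊤ : ℕ∞) (p1 Z a b) :=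
  contDiff_pd (h0 hZ b) a
lemma h2 (hZ : ContDiff ℝ (⊤ : ℕ∞) Z) (a b c : Fin n) : ContDiff ℝ (⊤ : ℕ∞) (p2 Z a b c) :=
  contDiff_pd (h1 hZ b c) a
lemma h3 (hZ : ContDiff ℝ (⊤ : ℕ∞) Z) (a b c d : Fin n) : ContDiff ℝ (⊤ : ℕ∞) (p3 Z a b c d) :=
  contDiff_pd (h2 hZ b c d) a

lemma p2_comm (hZ : ContDiff ℝ (⊤ : ℕ∞) Z) (a b c : Fin n) : p2 Z a b c = p2 Z b a c :=
  funext fun x => pd_comm (h0 hZ c) a b x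

lemma p3_comm1 (hZ : ContDiff ℝ (⊤ : ℕ∞) Z) (a b c d : Fin n) : p3 Z a b c d = p3 Z b a c d :=
  funext fun x => pd_comm (h1 hZ c d) a b x

lemma p3_comm2 (hZ : ContDiff ℝ (⊤ : ℕ∞) Z) (a b c d : Fin n) : p3 Z a b c d = p3 Z a c b d := by
  unfold p3
  rw [p2_comm hZ]

/- ## expansions -/

lemma E2 (hX : ContDiff ℝ (⊤ : ℕ∞) X) (hY : ContDiff ℝ (⊤ : ℕ∞) Y) (j k : Fin n) :
    p1 (vbracket X Y) j k = fun y => ∑ m,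
      ((X y m * p2 Y j m k y + p1 Y m k y * p1 X j m y)
        - (Y y m * p2 X j m k y + p1 X m k y * p1 Y j m y)) := by
  funext y
  show pd j (fun y' => vbracket X Y y' k) y = _
  have e : (fun y' => vbracket X Y y' k)
      = fun y' => ∑ m, ((fun y' => X y' m * p1 Y m k y') y' - (fun y' => Y y' m * p1 X m k y') y') := rfl
  rw [e]
  rw [pd_sum j (fun m _ => ((dAt (h0 hX m) y).fun_mul (dAt (h1 hY m k) y)).fun_sub
    ((dAt (h0 hY m) y).fun_mul (dAt (h1 hX m k) y)))]
  refine Finset.sum_congr rfl fun m _ => ?_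
  rw [pd_sub j ((dAt (h0 hX m) y).fun_mul (dAt (h1 hY m k) y))
        ((dAt (h0 hY m) y).fun_mul (dAt (h1 hX m k) y)),
      pd_mul j (dAt (h0 hX m) y) (dAt (h1 hY m k) y),
      pd_mul j (dAt (h0 hY m) y) (dAt (h1 hX m k) y)]
  rfl

lemma E3 (hX : ContDiff ℝ (⊤ : ℕ∞) X) (hY : ContDiff ℝ (⊤ : ℕ∞) Y) (i j k : Fin n) (x : Fin n → ℝ) :
    p2 (vbracket X Y) i j k x = ∑ m,
      (((X x m * p3 Y i j m k x + p2 Y j m k x * p1 X i m x)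
          + (p1 Y m k x * p2 X i j m x + p1 X j m x * p2 Y i m k x))
        - ((Y x m * p3 X i j m k x + p2 X j m k x * p1 Y i m x)
          + (p1 X m k x * p2 Y i j m x + p1 Y j m x * p2 X i m k x))) := by
  show pd i (p1 (vbracket X Y) j k) x = _
  rw [E2 hX hY j k]
  have dA : ∀ m : Fin n, DifferentiableAt ℝ
      (fun y => X y m * p2 Y j m k y + p1 Y m k y * p1 X j m y) x :=
    fun m => ((dAt (h0 hX m) x).mul (dAt (h2 hY j m k) x)).add
      ((dAt (h1 hY m k) x).mul (dAt (h1 hX j m) x))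
  have dB : ∀ m : Fin n, DifferentiableAt ℝ
      (fun y => Y y m * p2 X j m k y + p1 X m k y * p1 Y j m y) x :=
    fun m => ((dAt (h0 hY m) x).mul (dAt (h2 hX j m k) x)).add
      ((dAt (h1 hX m k) x).mul (dAt (h1 hY j m) x))
  rw [pd_sum i (fun m _ => (dA m).fun_sub (dB m))]
  refine Finset.sum_congr rfl fun m _ => ?_
  rw [pd_sub i (dA m) (dB m),
      pd_add i ((dAt (h0 hX m) x).fun_mul (dAt (h2 hY j m k) x)) ((dAt (h1 hY m k) x).fun_mul (dAt (h1 hX j m) x)),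
      pd_add i ((dAt (h0 hY m) x).fun_mul (dAt (h2 hX j m k) x)) ((dAt (h1 hX m k) x).fun_mul (dAt (h1 hY j m) x)),
      pd_mul i (dAt (h0 hX m) x) (dAt (h2 hY j m k) x),
      pd_mul i (dAt (h1 hY m k) x) (dAt (h1 hX j m) x),
      pd_mul i (dAt (h0 hY m) x) (dAt (h2 hX j m k) x),
      pd_mul i (dAt (h1 hX m k) x) (dAt (h1 hY j m) x)]
  rfl

lemma hvb (hX : ContDiff ℝ (⊤ : ℕ∞) X) (hY : ContDiff ℝ (⊤ : ℕ∞) Y) (k : Fin n) :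
    ContDiff ℝ (⊤ : ℕ∞) (fun y => vbracket X Y y k) := by
  have e : (fun y => vbracket X Y y k)
      = fun y => ∑ m, (X y m * p1 Y m k y - Y y m * p1 X m k y) := rfl
  rw [e]
  exact ContDiff.sum fun m _ => (((h0 hX m).mul (h1 hY m k)).sub ((h0 hY m).mul (h1 hX m k)))

lemma E4 (hX : ContDiff ℝ (⊤ : ℕ∞) X) (hY : ContDiff ℝ (⊤ : ℕ∞) Y) (j : Fin n) (x : Fin n → ℝ) :
    pd j (divVF (vbracket X Y)) x = ∑ k, p2 (vbracket X Y) j k k x := by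
  have e : divVF (vbracket X Y) = fun y => ∑ k, p1 (vbracket X Y) k k y := rfl
  rw [e, pd_sum j (fun k _ => dAt (h1 (by
    exact contDiff_pi.mpr (fun k => hvb hX hY k)) k k) x)]
  rfl

lemma E5 (hZ : ContDiff ℝ (⊤ : ℕ∞) Z) (j : Fin n) :
    pd j (divVF Z) = fun x => ∑ l, p2 Z j l l x := by
  funext x
  have e : divVF Z = fun y => ∑ l, p1 Z l l y := rfl
  rw [e, pd_sum j (fun l _ => dAt (h1 hZ l l) x)]
  rfl

lemma E6 (hZ : ContDiff ℝ (⊤ : ℕ∞) Z) (k j : Fin n) (x : Fin n → ℝ) :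
    pd k (pd j (divVF Z)) x = ∑ l, p3 Z k j l l x := by
  rw [E5 hZ j, pd_sum k (fun l _ => dAt (h2 hZ j l l) x)]
  rfl

lemma E7 (hZ : ContDiff ℝ (⊤ : ℕ∞) Z) (k h i j : Fin n) (x : Fin n → ℝ) :
    pd k (fun y => lbar Z y h i j) x
      = p3 Z k i j h x - (1 / ((n : ℝ) + 1)) *
          ((if h = i then (1:ℝ) else 0) * (∑ l, p3 Z k j l l x) +
           (if h = j then (1:ℝ) else 0) * (∑ l, p3 Z k i l l x)) := by
  have hdiv : ∀ a : Fin n, ContDiff ℝ (⊤ : ℕ∞) (pd a (divVF Z)) := fun a => by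
    rw [E5 hZ a]; exact ContDiff.sum fun l _ => h2 hZ a l l
  have e : (fun y => lbar Z y h i j)
      = fun y => p2 Z i j h y - (1 / ((n : ℝ) + 1)) *
          ((if h = i then (1:ℝ) else 0) * pd j (divVF Z) y +
           (if h = j then (1:ℝ) else 0) * pd i (divVF Z) y) := rfl
  rw [e]
  have d1 : DifferentiableAt ℝ (fun y => (if h = i then (1:ℝ) else 0) * pd j (divVF Z) y) x :=
    (dAt (hdiv j) x).const_mul _
  have d2 : DifferentiableAt ℝ (fun y => (if h = j then (1:ℝ) else 0) * pd i (divVF Z) y) x :=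
    (dAt (hdiv i) x).const_mul _
  rw [pd_sub k (dAt (h2 hZ i j h) x) (((d1.fun_add d2)).const_mul _),
      pd_const_mul k (d1.fun_add d2) _,
      pd_add k d1 d2,
      pd_const_mul k (dAt (hdiv j) x) _,
      pd_const_mul k (dAt (hdiv i) x) _,
      E6 hZ k j x, E6 hZ k i x]
  rfl

lemma key {N : ℕ} (κ : ℝ) (X0 Y0 : Fin N → ℝ) (X1 Y1 : Fin N → Fin N → ℝ)
    (X2 Y2 : Fin N → Fin N → Fin N → ℝ) (X3 Y3 : Fin N → Fin N → Fin N → Fin N → ℝ)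
    (hX2 : ∀ a b c, X2 a b c = X2 b a c) (hY2 : ∀ a b c, Y2 a b c = Y2 b a c)
    (hX3a : ∀ a b c d, X3 a b c d = X3 b a c d) (hX3b : ∀ a b c d, X3 a b c d = X3 a c b d)
    (hY3a : ∀ a b c d, Y3 a b c d = Y3 b a c d) (hY3b : ∀ a b c d, Y3 a b c d = Y3 a c b d)
    (h i j : Fin N) :
    (∑ m, (X0 m * Y3 i j m h + Y2 j m h * X1 i m + (Y1 m h * X2 i j m + X1 j m * Y2 i m h)
        - (Y0 m * X3 i j m h + X2 j m h * Y1 i m + (X1 m h * Y2 i j m + Y1 j m * X2 i m h))))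
    - κ * ((if h = i then (1:ℝ) else 0) *
          ∑ k, ∑ m, (X0 m * Y3 j k m k + Y2 k m k * X1 j m + (Y1 m k * X2 j k m + X1 k m * Y2 j m k)
            - (Y0 m * X3 j k m k + X2 k m k * Y1 j m + (X1 m k * Y2 j k m + Y1 k m * X2 j m k)))
        + (if h = j then (1:ℝ) else 0) *
          ∑ k, ∑ m, (X0 m * Y3 i k m k + Y2 k m k * X1 i m + (Y1 m k * X2 i k m + X1 k m * Y2 i m k)
            - (Y0 m * X3 i k m k + X2 k m k * Y1 i m + (X1 m k * Y2 i k m + Y1 k m * X2 i m k))))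
    = ∑ k, X0 k * (Y3 k i j h - κ * ((if h = i then (1:ℝ) else 0) * ∑ l, Y3 k j l l
            + (if h = j then (1:ℝ) else 0) * ∑ l, Y3 k i l l))
      - ∑ k, (Y2 i j k - κ * ((if k = i then (1:ℝ) else 0) * ∑ l, Y2 j l l
            + (if k = j then (1:ℝ) else 0) * ∑ l, Y2 i l l)) * X1 k h
      + ∑ k, (Y2 k j h - κ * ((if h = k then (1:ℝ) else 0) * ∑ l, Y2 j l l
            + (if h = j then (1:ℝ) else 0) * ∑ l, Y2 k l l)) * X1 i k
      + ∑ k, (Y2 i k h - κ * ((if h = i then (1:ℝ) else 0) * ∑ l, Y2 k l l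
            + (if h = k then (1:ℝ) else 0) * ∑ l, Y2 i l l)) * X1 j k
      - (∑ k, Y0 k * (X3 k i j h - κ * ((if h = i then (1:ℝ) else 0) * ∑ l, X3 k j l l
            + (if h = j then (1:ℝ) else 0) * ∑ l, X3 k i l l))
        - ∑ k, (X2 i j k - κ * ((if k = i then (1:ℝ) else 0) * ∑ l, X2 j l l
            + (if k = j then (1:ℝ) else 0) * ∑ l, X2 i l l)) * Y1 k h
        + ∑ k, (X2 k j h - κ * ((if h = k then (1:ℝ) else 0) * ∑ l, X2 j l l
            + (if h = j then (1:ℝ) else 0) * ∑ l, X2 k l l)) * Y1 i k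
        + ∑ k, (X2 i k h - κ * ((if h = i then (1:ℝ) else 0) * ∑ l, X2 k l l
            + (if h = k then (1:ℝ) else 0) * ∑ l, X2 i l l)) * Y1 j k) := by
  -- Step 1: rewrite the single sum
  have step1 : (∑ m, (X0 m * Y3 i j m h + Y2 j m h * X1 i m + (Y1 m h * X2 i j m + X1 j m * Y2 i m h)
        - (Y0 m * X3 i j m h + X2 j m h * Y1 i m + (X1 m h * Y2 i j m + Y1 j m * X2 i m h))))
      = ((∑ k, X0 k * Y3 k i j h) - (∑ k, Y2 i j k * X1 k h) + (∑ k, Y2 k j h * X1 i k)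
          + (∑ k, Y2 i k h * X1 j k))
        - ((∑ k, Y0 k * X3 k i j h) - (∑ k, X2 i j k * Y1 k h) + (∑ k, X2 k j h * Y1 i k)
          + (∑ k, X2 i k h * Y1 j k)) := by
    have e : ∀ m, (X0 m * Y3 i j m h + Y2 j m h * X1 i m + (Y1 m h * X2 i j m + X1 j m * Y2 i m h)
        - (Y0 m * X3 i j m h + X2 j m h * Y1 i m + (X1 m h * Y2 i j m + Y1 j m * X2 i m h)))
        = (X0 m * Y3 m i j h - Y2 i j m * X1 m h + Y2 m j h * X1 i m + Y2 i m h * X1 j m)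
          - (Y0 m * X3 m i j h - X2 i j m * Y1 m h + X2 m j h * Y1 i m + X2 i m h * Y1 j m) := by
      intro m
      have e1 : Y3 i j m h = Y3 m i j h := by rw [hY3b, hY3a]
      have e2 : X3 i j m h = X3 m i j h := by rw [hX3b, hX3a]
      have e3 : Y2 j m h = Y2 m j h := hY2 j m h
      have e4 : X2 j m h = X2 m j h := hX2 j m h
      have e5 : Y2 i m h = Y2 i m h := rfl
      rw [e1, e2, e3, e4]; ring
    rw [Finset.sum_congr rfl fun m _ => e m]
    simp [Finset.sum_add_distrib, Finset.sum_sub_distrib]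
  -- Step 2: the divergence double sums
  have step2 : ∀ a : Fin N,
      (∑ k, ∑ m, (X0 m * Y3 a k m k + Y2 k m k * X1 a m + (Y1 m k * X2 a k m + X1 k m * Y2 a m k)
        - (Y0 m * X3 a k m k + X2 k m k * Y1 a m + (X1 m k * Y2 a k m + Y1 k m * X2 a m k))))
      = ((∑ m, X0 m * (∑ l, Y3 m a l l)) + (∑ m, X1 a m * (∑ l, Y2 m l l)))
        - ((∑ m, Y0 m * (∑ l, X3 m a l l)) + (∑ m, Y1 a m * (∑ l, X2 m l l))) := by
    intro a
    have hT1 : ∑ k, ∑ m, X0 m * Y3 a k m k = ∑ m, X0 m * (∑ l, Y3 m a l l) := by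
      rw [Finset.sum_comm]
      refine Finset.sum_congr rfl fun m _ => ?_
      rw [Finset.mul_sum]
      refine Finset.sum_congr rfl fun k _ => ?_
      have : Y3 a k m k = Y3 m a k k := by rw [hY3b, hY3a]
      rw [this]
    have hS1 : ∑ k, ∑ m, Y0 m * X3 a k m k = ∑ m, Y0 m * (∑ l, X3 m a l l) := by
      rw [Finset.sum_comm]
      refine Finset.sum_congr rfl fun m _ => ?_
      rw [Finset.mul_sum]
      refine Finset.sum_congr rfl fun k _ => ?_
      have : X3 a k m k = X3 m a k k := by rw [hX3b, hX3a]
      rw [this]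
    have hT2 : ∑ k, ∑ m, Y2 k m k * X1 a m = ∑ m, X1 a m * (∑ l, Y2 m l l) := by
      rw [Finset.sum_comm]
      refine Finset.sum_congr rfl fun m _ => ?_
      rw [Finset.mul_sum]
      refine Finset.sum_congr rfl fun k _ => ?_
      rw [hY2 k m k]; ring
    have hS2 : ∑ k, ∑ m, X2 k m k * Y1 a m = ∑ m, Y1 a m * (∑ l, X2 m l l) := by
      rw [Finset.sum_comm]
      refine Finset.sum_congr rfl fun m _ => ?_
      rw [Finset.mul_sum]
      refine Finset.sum_congr rfl fun k _ => ?_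
      rw [hX2 k m k]; ring
    have hT3 : ∑ k, ∑ m, Y1 k m * X2 a m k = ∑ k, ∑ m, Y1 m k * X2 a k m := Finset.sum_comm
    have hS3 : ∑ k, ∑ m, X1 k m * Y2 a m k = ∑ k, ∑ m, X1 m k * Y2 a k m := Finset.sum_comm
    calc (∑ k, ∑ m, (X0 m * Y3 a k m k + Y2 k m k * X1 a m + (Y1 m k * X2 a k m + X1 k m * Y2 a m k)
        - (Y0 m * X3 a k m k + X2 k m k * Y1 a m + (X1 m k * Y2 a k m + Y1 k m * X2 a m k))))
        = (∑ k, ∑ m, X0 m * Y3 a k m k) + (∑ k, ∑ m, Y2 k m k * X1 a m)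
          + (∑ k, ∑ m, Y1 m k * X2 a k m) + (∑ k, ∑ m, X1 k m * Y2 a m k)
          - ((∑ k, ∑ m, Y0 m * X3 a k m k) + (∑ k, ∑ m, X2 k m k * Y1 a m)
          + (∑ k, ∑ m, X1 m k * Y2 a k m) + (∑ k, ∑ m, Y1 k m * X2 a m k)) := by
          simp [Finset.sum_add_distrib, Finset.sum_sub_distrib]; ring
      _ = _ := by rw [hT1, hS1, hT2, hS2, ← hT3, ← hS3]; ring
  rw [step1, step2 j, step2 i]
  -- Step 3: expand each sum on the right-hand side
  have R1 : ∀ (W0 : Fin N → ℝ) (W3 : Fin N → Fin N → Fin N → Fin N → ℝ),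
      ∑ k, W0 k * (W3 k i j h - κ * ((if h = i then (1:ℝ) else 0) * ∑ l, W3 k j l l
          + (if h = j then (1:ℝ) else 0) * ∑ l, W3 k i l l))
      = (∑ k, W0 k * W3 k i j h)
        - κ * ((if h = i then (1:ℝ) else 0) * ∑ k, W0 k * (∑ l, W3 k j l l))
        - κ * ((if h = j then (1:ℝ) else 0) * ∑ k, W0 k * (∑ l, W3 k i l l)) := by
    intro W0 W3
    have e : ∀ k, W0 k * (W3 k i j h - κ * ((if h = i then (1:ℝ) else 0) * ∑ l, W3 k j l l
          + (if h = j then (1:ℝ) else 0) * ∑ l, W3 k i l l))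
        = W0 k * W3 k i j h
          - κ * ((if h = i then (1:ℝ) else 0) * (W0 k * (∑ l, W3 k j l l)))
          - κ * ((if h = j then (1:ℝ) else 0) * (W0 k * (∑ l, W3 k i l l))) := fun k => by ring
    rw [Finset.sum_congr rfl fun k _ => e k]
    simp only [Finset.sum_sub_distrib, ← Finset.mul_sum]
  have R2 : ∀ (W1 : Fin N → Fin N → ℝ) (W2 : Fin N → Fin N → Fin N → ℝ),
      ∑ k, (W2 i j k - κ * ((if k = i then (1:ℝ) else 0) * ∑ l, W2 j l l
          + (if k = j then (1:ℝ) else 0) * ∑ l, W2 i l l)) * W1 k h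
      = (∑ k, W2 i j k * W1 k h)
        - κ * ((∑ l, W2 j l l) * W1 i h) - κ * ((∑ l, W2 i l l) * W1 j h) := by
    intro W1 W2
    have e : ∀ k, (W2 i j k - κ * ((if k = i then (1:ℝ) else 0) * ∑ l, W2 j l l
          + (if k = j then (1:ℝ) else 0) * ∑ l, W2 i l l)) * W1 k h
        = W2 i j k * W1 k h
          - κ * (if k = i then (∑ l, W2 j l l) * W1 k h else 0)
          - κ * (if k = j then (∑ l, W2 i l l) * W1 k h else 0) := by
      intro k
      by_cases h1 : k = i <;> by_cases h2 : k = j <;> simp [h1, h2, mul_ite, ite_mul, mul_zero, zero_mul] <;> split_ifs <;> ring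
    rw [Finset.sum_congr rfl fun k _ => e k]
    simp only [Finset.sum_sub_distrib, ← Finset.mul_sum, Finset.sum_ite_eq',
      Finset.mem_univ, if_true]
  have R3 : ∀ (W1 : Fin N → Fin N → ℝ) (W2 : Fin N → Fin N → Fin N → ℝ),
      ∑ k, (W2 k j h - κ * ((if h = k then (1:ℝ) else 0) * ∑ l, W2 j l l
          + (if h = j then (1:ℝ) else 0) * ∑ l, W2 k l l)) * W1 i k
      = (∑ k, W2 k j h * W1 i k)
        - κ * ((∑ l, W2 j l l) * W1 i h)
        - κ * ((if h = j then (1:ℝ) else 0) * ∑ k, W1 i k * (∑ l, W2 k l l)) := by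
    intro W1 W2
    have e : ∀ k, (W2 k j h - κ * ((if h = k then (1:ℝ) else 0) * ∑ l, W2 j l l
          + (if h = j then (1:ℝ) else 0) * ∑ l, W2 k l l)) * W1 i k
        = W2 k j h * W1 i k
          - κ * (if h = k then (∑ l, W2 j l l) * W1 i k else 0)
          - κ * ((if h = j then (1:ℝ) else 0) * (W1 i k * (∑ l, W2 k l l))) := by
      intro k
      by_cases h1 : h = k <;> by_cases h2 : h = i <;> by_cases h3 : h = j <;> simp [h1, h2, h3, mul_ite, ite_mul, mul_zero, zero_mul] <;> split_ifs <;> ring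
    rw [Finset.sum_congr rfl fun k _ => e k]
    simp only [Finset.sum_sub_distrib, ← Finset.mul_sum, Finset.sum_ite_eq,
      Finset.mem_univ, if_true]
  have R4 : ∀ (W1 : Fin N → Fin N → ℝ) (W2 : Fin N → Fin N → Fin N → ℝ),
      ∑ k, (W2 i k h - κ * ((if h = i then (1:ℝ) else 0) * ∑ l, W2 k l l
          + (if h = k then (1:ℝ) else 0) * ∑ l, W2 i l l)) * W1 j k
      = (∑ k, W2 i k h * W1 j k)
        - κ * ((if h = i then (1:ℝ) else 0) * ∑ k, W1 j k * (∑ l, W2 k l l))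
        - κ * ((∑ l, W2 i l l) * W1 j h) := by
    intro W1 W2
    have e : ∀ k, (W2 i k h - κ * ((if h = i then (1:ℝ) else 0) * ∑ l, W2 k l l
          + (if h = k then (1:ℝ) else 0) * ∑ l, W2 i l l)) * W1 j k
        = W2 i k h * W1 j k
          - κ * ((if h = i then (1:ℝ) else 0) * (W1 j k * (∑ l, W2 k l l)))
          - κ * (if h = k then (∑ l, W2 i l l) * W1 j k else 0) := by
      intro k
      by_cases h1 : h = k <;> by_cases h2 : h = i <;> by_cases h3 : h = j <;> simp [h1, h2, h3, mul_ite, ite_mul, mul_zero, zero_mul] <;> split_ifs <;> ring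
    rw [Finset.sum_congr rfl fun k _ => e k]
    simp only [Finset.sum_sub_distrib, ← Finset.mul_sum, Finset.sum_ite_eq,
      Finset.mem_univ, if_true]
  rw [R1 X0 Y3, R1 Y0 X3, R2 X1 Y2, R2 Y1 X2, R3 X1 Y2, R3 Y1 X2, R4 X1 Y2, R4 Y1 X2]
  ring


lemma pd_coord (i m : Fin n) (x : Fin n → ℝ) :
    pd i (fun y : Fin n → ℝ => y m) x = if m = i then 1 else 0 := by
  have : (fun y : Fin n → ℝ => y m) = (ContinuousLinearMap.proj (R := ℝ) (φ := fun _ : Fin n => ℝ) m) := rfl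
  rw [pd, this, ContinuousLinearMap.fderiv]
  simp [Pi.single_apply]

/-- Quadratic vector fields. -/
def Quad (n : ℕ) : Submodule ℝ ((Fin n → ℝ) → Fin n → ℝ) where
  carrier := {X | ∃ (a : Fin n → ℝ) (B : Fin n → Fin n → ℝ) (c : Fin n → ℝ),
    X = fun x k => a k + (∑ m, B k m * x m) + (∑ m, c m * x m) * x k}
  add_mem' := by
    rintro X Y ⟨a, B, c, rfl⟩ ⟨a', B', c', rfl⟩
    refine ⟨a + a', B + B', c + c', ?_⟩
    funext x k
    simp [Finset.sum_add_distrib, add_mul]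
    ring
  zero_mem' := ⟨0, 0, 0, by funext x k; simp⟩
  smul_mem' := by
    rintro r X ⟨a, B, c, rfl⟩
    refine ⟨r • a, r • B, r • c, ?_⟩
    funext x k
    have h1 : r * ∑ m, B k m * x m = ∑ m, (r • B) k m * x m := by
      rw [Finset.mul_sum]; exact Finset.sum_congr rfl fun m _ => by simp [mul_assoc]
    have h2 : r * ((∑ m, c m * x m) * x k) = (∑ m, (r • c) m * x m) * x k := by
      rw [Finset.sum_mul, Finset.mul_sum, Finset.sum_mul]
      exact Finset.sum_congr rfl fun m _ => by simp; ring
    simp only [Pi.smul_apply, smul_eq_mul, mul_add, h1, h2]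

lemma gen_sub : projGenerators n ⊆ (Quad n : Set _) := by
  rintro X ((⟨i, rfl⟩ | ⟨i, j, rfl⟩) | ⟨i, rfl⟩)
  · exact ⟨Pi.single i 1, 0, 0, by funext x k; simp⟩
  · refine ⟨0, fun k m => if k = j ∧ m = i then 1 else 0, 0, ?_⟩
    funext x k
    simp [Pi.single_apply, Finset.sum_ite_eq, ite_and]
  · refine ⟨0, 0, Pi.single i 1, ?_⟩
    funext x k
    simp [Pi.single_apply, Finset.sum_ite_eq, ite_mul]

lemma quad_pd1 (a : Fin n → ℝ) (B : Fin n → Fin n → ℝ) (c : Fin n → ℝ) (h j : Fin n)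
    (x : Fin n → ℝ) :
    pd j (fun y => a h + (∑ m, B h m * y m) + (∑ m, c m * y m) * y h) x
      = B h j + (c j * x h + (∑ m, c m * x m) * (if h = j then 1 else 0)) := by
  unfold pd
  have d1 : ∀ (m : Fin n), DifferentiableAt ℝ (fun y : Fin n → ℝ => y m) x := by
    intro m
    exact (ContinuousLinearMap.proj (R := ℝ) (φ := fun _ : Fin n => ℝ) m).differentiableAt
  have dsum : ∀ (w : Fin n → ℝ), DifferentiableAt ℝ (fun y : Fin n → ℝ => ∑ m, w m * y m) x := by
    intro w
    exact DifferentiableAt.fun_sum (fun m _ => (d1 m).const_mul (w m))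
  have hfd : ∀ (w : Fin n → ℝ) (y : Fin n → ℝ),
      fderiv ℝ (fun y : Fin n → ℝ => ∑ m, w m * y m) x y = ∑ m, w m * y m := by
    intro w y
    rw [fderiv_fun_sum (fun m _ => (d1 m).const_mul (w m))]
    have : ∀ m : Fin n, fderiv ℝ (fun y : Fin n → ℝ => w m * y m) x
        = w m • fderiv ℝ (fun y : Fin n → ℝ => y m) x := fun m => fderiv_const_mul (d1 m) (w m)
    simp only [ContinuousLinearMap.sum_apply, this]
    have hp : ∀ m : Fin n, fderiv ℝ (fun y : Fin n → ℝ => y m) x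
        = ContinuousLinearMap.proj (R := ℝ) (φ := fun _ : Fin n => ℝ) m :=
      fun m => (ContinuousLinearMap.proj (R := ℝ) (φ := fun _ : Fin n => ℝ) m).fderiv
    simp [hp]
  have hsplit : (fun y : Fin n → ℝ => a h + (∑ m, B h m * y m) + (∑ m, c m * y m) * y h)
      = fun y => (fun y : Fin n → ℝ => a h + (∑ m, B h m * y m)) y
        + ((fun y : Fin n → ℝ => ∑ m, c m * y m) y * (fun y : Fin n → ℝ => y h) y) := rfl
  rw [hsplit, fderiv_fun_add (by exact (differentiableAt_const _).fun_add (dsum _))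
      (by exact (dsum c).fun_mul (d1 h)),
    fderiv_fun_mul (dsum c) (d1 h)]
  have h2 : fderiv ℝ (fun y : Fin n → ℝ => a h + ∑ m, B h m * y m) x
      = fderiv ℝ (fun y : Fin n → ℝ => ∑ m, B h m * y m) x := by
    exact fderiv_const_add _
  rw [h2]
  have hp : fderiv ℝ (fun y : Fin n → ℝ => y h) x
      = ContinuousLinearMap.proj (R := ℝ) (φ := fun _ : Fin n => ℝ) h :=
    (ContinuousLinearMap.proj (R := ℝ) (φ := fun _ : Fin n => ℝ) h).fderiv
  simp [hfd, hp, Pi.single_apply, Finset.sum_ite_eq, mul_comm]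
  ring

lemma pd_add' {f g : (Fin n → ℝ) → ℝ} {x : Fin n → ℝ} (i : Fin n)
    (hf : DifferentiableAt ℝ f x) (hg : DifferentiableAt ℝ g x) :
    pd i (fun y => f y + g y) x = pd i f x + pd i g x := by
  simp [pd, fderiv_fun_add hf hg]

lemma diff_coord (m : Fin n) (x : Fin n → ℝ) :
    DifferentiableAt ℝ (fun y : Fin n → ℝ => y m) x :=
  (ContinuousLinearMap.proj (R := ℝ) (φ := fun _ : Fin n => ℝ) m).differentiableAt

lemma diff_linear (w : Fin n → ℝ) (x : Fin n → ℝ) :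
    DifferentiableAt ℝ (fun y : Fin n → ℝ => ∑ m, w m * y m) x :=
  DifferentiableAt.fun_sum (fun m _ => (diff_coord m x).const_mul (w m))

lemma pd_linear (w : Fin n → ℝ) (i : Fin n) (x : Fin n → ℝ) :
    pd i (fun y : Fin n → ℝ => ∑ m, w m * y m) x = w i := by
  unfold pd
  rw [fderiv_fun_sum (fun m _ => (diff_coord m x).const_mul (w m))]
  have : ∀ m : Fin n, fderiv ℝ (fun y : Fin n → ℝ => w m * y m) x
      = w m • fderiv ℝ (fun y : Fin n → ℝ => y m) x := fun m => fderiv_const_mul (diff_coord m x) (w m)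
  have hp : ∀ m : Fin n, fderiv ℝ (fun y : Fin n → ℝ => y m) x
      = ContinuousLinearMap.proj (R := ℝ) (φ := fun _ : Fin n => ℝ) m :=
    fun m => (ContinuousLinearMap.proj (R := ℝ) (φ := fun _ : Fin n => ℝ) m).fderiv
  simp [this, hp, Pi.single_apply, Finset.sum_ite_eq]

lemma pd_const_mul' {f : (Fin n → ℝ) → ℝ} {x : Fin n → ℝ} (i : Fin n)
    (hf : DifferentiableAt ℝ f x) (c : ℝ) :
    pd i (fun y => c * f y) x = c * pd i f x := by
  simp [pd, fderiv_const_mul hf c]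

lemma pd_mul_constR {f : (Fin n → ℝ) → ℝ} {x : Fin n → ℝ} (i : Fin n)
    (hf : DifferentiableAt ℝ f x) (K : ℝ) :
    pd i (fun y => f y * K) x = pd i f x * K := by
  have : (fun y => f y * K) = fun y => K * f y := by funext y; ring
  rw [this, pd_const_mul' i hf K]; ring

lemma quad_pd2 (a : Fin n → ℝ) (B : Fin n → Fin n → ℝ) (c : Fin n → ℝ) (h i j : Fin n)
    (x : Fin n → ℝ) :
    pd i (pd j (fun y => a h + (∑ m, B h m * y m) + (∑ m, c m * y m) * y h)) x
      = c j * (if h = i then 1 else 0) + (if h = j then 1 else 0) * c i := by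
  have e1 : pd j (fun y => a h + (∑ m, B h m * y m) + (∑ m, c m * y m) * y h)
      = fun y => B h j + (c j * y h + (∑ m, c m * y m) * (if h = j then 1 else 0)) := by
    funext y; exact quad_pd1 a B c h j y
  rw [e1]
  have d2 : DifferentiableAt ℝ (fun y : Fin n → ℝ => c j * y h) x :=
    (diff_coord h x).const_mul _
  have d3 : DifferentiableAt ℝ (fun y : Fin n → ℝ => (∑ m, c m * y m) * (if h = j then 1 else 0)) x :=
    (diff_linear c x).mul_const _
  rw [pd_add' i (differentiableAt_const _) (d2.fun_add d3), pd_add' i d2 d3,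
    pd_const_mul' i (diff_coord h x) (c j), pd_mul_constR i (diff_linear c x) _,
    pd_coord, pd_linear]
  have : pd i (fun _ : Fin n → ℝ => B h j) x = 0 := by simp [pd]
  rw [this]; ring


lemma quad_pddiv (a : Fin n → ℝ) (B : Fin n → Fin n → ℝ) (c : Fin n → ℝ) (j : Fin n)
    (x : Fin n → ℝ) :
    pd j (divVF (fun x k => a k + (∑ m, B k m * x m) + (∑ m, c m * x m) * x k)) x
      = ((n : ℝ) + 1) * c j := by
  have e1 : divVF (fun x k => a k + (∑ m, B k m * x m) + (∑ m, c m * x m) * x k)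
      = fun y => ∑ l, (B l l + (c l * y l + (∑ m, c m * y m) * (if (l : Fin n) = l then 1 else 0))) := by
    funext y
    exact Finset.sum_congr rfl fun l _ => quad_pd1 a B c l l y
  rw [e1]
  have hd : ∀ l : Fin n, DifferentiableAt ℝ
      (fun y : Fin n → ℝ => B l l + (c l * y l + (∑ m, c m * y m) * (if (l : Fin n) = l then 1 else 0))) x := by
    intro l
    exact (differentiableAt_const _).add (((diff_coord l x).const_mul _).add
      ((diff_linear c x).mul_const _))
  rw [pd_sum j (fun l _ => hd l)]
  have e2 : ∀ l : Fin n, pd j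
      (fun y : Fin n → ℝ => B l l + (c l * y l + (∑ m, c m * y m) * (if (l : Fin n) = l then 1 else 0))) x
      = c l * (if l = j then 1 else 0) + c j := by
    intro l
    have d2 : DifferentiableAt ℝ (fun y : Fin n → ℝ => c l * y l) x := (diff_coord l x).const_mul _
    have d3 : DifferentiableAt ℝ (fun y : Fin n → ℝ => (∑ m, c m * y m) * (if (l : Fin n) = l then 1 else 0)) x :=
      (diff_linear c x).mul_const _
    rw [pd_add' j (differentiableAt_const _) (d2.fun_add d3), pd_add' j d2 d3,
      pd_const_mul' j (diff_coord l x) (c l), pd_mul_constR j (diff_linear c x) _,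
      pd_coord, pd_linear]
    have : pd j (fun _ : Fin n → ℝ => B l l) x = 0 := by simp [pd]
    rw [this]; simp
  rw [Finset.sum_congr rfl fun l _ => e2 l]
  rw [Finset.sum_add_distrib]
  simp [mul_ite, Finset.sum_ite_eq']
  ring

lemma quad_lbar (a : Fin n → ℝ) (B : Fin n → Fin n → ℝ) (c : Fin n → ℝ) :
    lbar (fun x k => a k + (∑ m, B k m * x m) + (∑ m, c m * x m) * x k) = 0 := by
  funext x h i j
  show pd i (pd j (fun y => a h + (∑ m, B h m * y m) + (∑ m, c m * y m) * y h)) x -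
      (1 / ((n : ℝ) + 1)) *
        ((if h = i then (1:ℝ) else 0) * pd j (divVF _) x +
         (if h = j then (1:ℝ) else 0) * pd i (divVF _) x) = 0
  rw [quad_pd2, quad_pddiv a B c j x, quad_pddiv a B c i x]
  have hn : (1 / ((n : ℝ) + 1)) * ((n : ℝ) + 1) = 1 := by
    field_simp
  set d1 := (if h = i then (1:ℝ) else 0)
  set d2 := (if h = j then (1:ℝ) else 0)
  linear_combination -(d1 * c j + d2 * c i) * hn

lemma part2 : ∀ X ∈ Submodule.span ℝ (projGenerators n), lbar X = 0 := by
  intro X hX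
  have : X ∈ Quad n := Submodule.span_le.mpr gen_sub hX
  obtain ⟨a, B, c, rfl⟩ := this
  exact quad_lbar a B c

end Lb

/-- `ℓ̄` is a 1-cocycle on `Vect(ℝⁿ)`:
`ℓ̄([X,Y]) = L_X(ℓ̄(Y)) − L_Y(ℓ̄(X))`, and `ℓ̄` vanishes on the projective
Lie algebra `sl(n+1,ℝ)`. -/
theorem lbar_cocycle_and_vanishes (n : ℕ) :
    (∀ X Y : (Fin n → ℝ) → Fin n → ℝ, ContDiff ℝ (⊤ : ℕ∞) X → ContDiff ℝ (⊤ : ℕ∞) Y →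
      lbar (vbracket X Y)
        = fun x h i j => lieTens X (lbar Y) x h i j - lieTens Y (lbar X) x h i j) ∧
    (∀ X ∈ Submodule.span ℝ (projGenerators n), lbar X = 0) := by
  constructor
  · intro X Y hX hY
    funext x h i j
    simp only [lieTens]
    simp only [Lb.E7 hY, Lb.E7 hX]
    simp only [lbar]
    simp only [Lb.E5 hX, Lb.E5 hY]
    simp only [Lb.p1_eq, Lb.p2_eq]
    simp only [Lb.E4 hX hY]
    simp only [Lb.E3 hX hY]
    exact Lb.key (1 / ((n : ℝ) + 1)) (X x) (Y x)
      (fun a b => Lb.p1 X a b x) (fun a b => Lb.p1 Y a b x)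
      (fun a b c => Lb.p2 X a b c x) (fun a b c => Lb.p2 Y a b c x)
      (fun a b c d => Lb.p3 X a b c d x) (fun a b c d => Lb.p3 Y a b c d x)
      (fun a b c => congrFun (Lb.p2_comm hX a b c) x)
      (fun a b c => congrFun (Lb.p2_comm hY a b c) x)
      (fun a b c d => congrFun (Lb.p3_comm1 hX a b c d) x)
      (fun a b c d => congrFun (Lb.p3_comm2 hX a b c d) x)
      (fun a b c d => congrFun (Lb.p3_comm1 hY a b c d) x)
      (fun a b c d => congrFun (Lb.p3_comm2 hY a b c d) x)
      h i j
  · exact Lb.part2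
end
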